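/- arXiv:1104.0470 — 9 statements merged into one kernel-verified Lean document; each statement's English description precedes it below -/
import Mathlib

section
/- Let (a_n)_{n≥1} be a monotone decreasing sequence of positive reals with a_1 = 1, define b_0 = 1, b_{n+1} = (1/(n+1)) Σ_{k=0}^n a_{k+1} b_{n-k}, and c_{n+1} = b_n - b_{n+1} for n ≥ 0. Then c_n ≥ 0 for all n ≥ 1. -/
theorem stmt_2 (a b c : ℕ → ℝ)
    (ha_pos : ∀ n, 1 ≤ n → 0 < a n)
    (ha_dec : ∀ n, 1 ≤ n → a (n + 1) ≤ a n)
    (ha1 : a 1 = 1)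
    (hb0 : b 0 = 1)
    (hb : ∀ n : ℕ, b (n + 1) =
      (1 / (n + 1 : ℝ)) * ∑ k ∈ Finset.range (n + 1), a (k + 1) * b (n - k))
    (hc : ∀ n : ℕ, c (n + 1) = b n - b (n + 1)) :
    ∀ n, 1 ≤ n → 0 ≤ c n := by
  have hbpos : ∀ n, 0 < b n := by
    intro n
    induction n using Nat.strong_induction_on with
    | _ n ih =>
      cases n with
      | zero => simp [hb0]
      | succ m =>
        rw [hb]
        apply mul_pos (by positivity)
        apply Finset.sum_pos
        · intro k hk
          exact mul_pos (ha_pos _ (Nat.le_add_left 1 k))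
            (ih (m - k) (Nat.lt_succ_of_le (Nat.sub_le m k)))
        · exact Finset.nonempty_range_add_one
  have hb' : ∀ n : ℕ, ((n : ℝ) + 1) * b (n + 1) =
      ∑ k ∈ Finset.range (n + 1), a (k + 1) * b (n - k) := by
    intro n
    rw [hb n]
    have : ((n : ℝ) + 1) ≠ 0 := by positivity
    field_simp
  have key : ∀ n : ℕ, 0 ≤ b n - b (n + 1) := by
    intro n
    cases n with
    | zero =>
      have h1 := hb 0
      simp [ha1, hb0] at h1
      simp [h1, hb0]
    | succ m =>
      have h2 := hb' (m + 1)
      rw [Finset.sum_range_succ'] at h2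
      simp only [Nat.succ_sub_succ, Nat.sub_zero, ha1, one_mul] at h2
      have h1 := hb' m
      have hsum : ((m : ℝ) + 2) * (b (m + 1) - b (m + 2)) =
          ∑ k ∈ Finset.range (m + 1), (a (k + 1) - a (k + 2)) * b (m - k) := by
        simp only [sub_mul]
        rw [Finset.sum_sub_distrib]
        push_cast at h2
        linarith [h1, h2]
      have hnn : 0 ≤ ∑ k ∈ Finset.range (m + 1), (a (k + 1) - a (k + 2)) * b (m - k) := by
        apply Finset.sum_nonneg
        intro k hk
        exact mul_nonneg (sub_nonneg.mpr (ha_dec (k + 1) (Nat.le_add_left 1 k)))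
          (le_of_lt (hbpos (m - k)))
      rw [← hsum] at hnn
      nlinarith [hnn, (Nat.cast_nonneg m : (0:ℝ) ≤ m)]
  intro n hn
  obtain ⟨m, rfl⟩ := Nat.exists_eq_add_of_le hn
  rw [Nat.add_comm, hc]
  exact key m
end

section
/- Let (a_n)_{n≥1} be a non-constant monotone decreasing sequence of positive reals with a_1 = 1, set ℓ = min{k ≥ 1 : a_k < 1}, define b_0 = 1, b_{n+1} = (1/(n+1)) Σ_{k=0}^n a_{k+1} b_{n-k}, and c_{n+1} = b_n - b_{n+1}. Then c_n = 0 for 1 ≤ n < ℓ and c_n > 0 for n ≥ ℓ. -/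
theorem stmt_3 (a b c : ℕ → ℝ) (ℓ : ℕ)
    (ha_pos : ∀ n, 1 ≤ n → 0 < a n)
    (ha_dec : ∀ n, 1 ≤ n → a (n + 1) ≤ a n)
    (ha1 : a 1 = 1)
    (ha_nonconst : ∃ k, 1 ≤ k ∧ a k < 1)
    (hl : IsLeast {k : ℕ | 1 ≤ k ∧ a k < 1} ℓ)
    (hb0 : b 0 = 1)
    (hb : ∀ n : ℕ, b (n + 1) =
      (1 / (n + 1 : ℝ)) * ∑ k ∈ Finset.range (n + 1), a (k + 1) * b (n - k))
    (hc : ∀ n : ℕ, c (n + 1) = b n - b (n + 1)) :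
    (∀ n, 1 ≤ n → n < ℓ → c n = 0) ∧ (∀ n, ℓ ≤ n → 0 < c n) := by
  have hbpos : ∀ n, 0 < b n := by
    intro n
    induction n using Nat.strong_induction_on with
    | _ n ih =>
      match n with
      | 0 => simp [hb0]
      | m + 1 =>
        rw [hb]
        apply mul_pos (by positivity)
        apply Finset.sum_pos
        · intro k hk
          exact mul_pos (ha_pos _ (by omega)) (ih _ (by omega))
        · exact Finset.nonempty_range_add_one
  have ha_le1 : ∀ k, 1 ≤ k → a k ≤ 1 := by
    intro k hk
    induction k, hk using Nat.le_induction with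
    | base => exact le_of_eq ha1
    | succ m hm ih => exact (ha_dec m hm).trans ih
  have ha_eq1 : ∀ k, 1 ≤ k → k < ℓ → a k = 1 := by
    intro k hk hkl
    refine le_antisymm (ha_le1 k hk) ?_
    by_contra h
    exact absurd (hl.2 ⟨hk, by linarith⟩) (by omega)
  have hl2 : 2 ≤ ℓ := by
    have h1 := hl.1.1
    have h2 := hl.1.2
    by_contra h
    interval_cases ℓ <;> simp_all
  have hbmul : ∀ n : ℕ, ((n : ℝ) + 1) * b (n + 1)
      = ∑ k ∈ Finset.range (n + 1), a (k + 1) * b (n - k) := by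
    intro n
    rw [hb n]
    have : ((n : ℝ) + 1) ≠ 0 := by positivity
    field_simp
  have key : ∀ n : ℕ, ((n : ℝ) + 2) * c (n + 2)
      = ∑ j ∈ Finset.range (n + 1), (a (j + 1) - a (j + 2)) * b (n - j) := by
    intro n
    have h1 := hbmul (n + 1)
    have h2 := hbmul n
    rw [Finset.sum_range_succ'] at h1
    simp only [Nat.succ_sub_succ, Nat.sub_zero, ha1, one_mul] at h1
    push_cast at h1
    rw [hc]
    simp_rw [sub_mul]
    rw [Finset.sum_sub_distrib]
    have e : ∀ i ∈ Finset.range (n+1), a (i + 1 + 1) * b (n - i) = a (i + 2) * b (n - i) := by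
      intro i _; norm_num
    rw [Finset.sum_congr rfl e] at h1
    linarith [h1, h2]
  constructor
  · intro n h1 h2
    match n with
    | 1 =>
      rw [hc 0, hb 0]
      simp [hb0, ha1]
    | m + 2 =>
      have hk := key m
      have hz : ∀ j ∈ Finset.range (m + 1), (a (j + 1) - a (j + 2)) * b (m - j) = 0 := by
        intro j hj
        simp only [Finset.mem_range] at hj
        rw [ha_eq1 (j+1) (by omega) (by omega), ha_eq1 (j+2) (by omega) (by omega)]
        ring
      rw [Finset.sum_eq_zero hz] at hk
      have : ((m : ℝ) + 2) ≠ 0 := by positivity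
      have := mul_eq_zero.mp hk
      tauto
  · intro n hn
    obtain ⟨m, rfl⟩ : ∃ m, n = m + 2 := ⟨n - 2, by omega⟩
    have hk := key m
    have hsum : 0 < ∑ j ∈ Finset.range (m + 1), (a (j + 1) - a (j + 2)) * b (m - j) := by
      apply Finset.sum_pos'
      · intro j hj
        have := ha_dec (j + 1) (by omega)
        have := (hbpos (m - j)).le
        nlinarith
      · refine ⟨ℓ - 2, Finset.mem_range.mpr (by omega), ?_⟩
        have e1 : ℓ - 2 + 1 = ℓ - 1 := by omega
        have e2 : ℓ - 2 + 2 = ℓ := by omega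
        rw [e1, e2, ha_eq1 (ℓ - 1) (by omega) (by omega)]
        have := hl.1.2
        have := hbpos (m - (ℓ - 2))
        nlinarith
    rw [← hk] at hsum
    by_contra h
    push_neg at h
    nlinarith [hsum, h]
end

section
/- Let (a_n)_{n≥1} be a non-constant monotone decreasing sequence of positive reals with a_1 = 1, let ℓ = min{k ≥ 1 : a_k < 1}, and let F(z) = 1 - (1-z) exp(Σ_{n≥1} (a_n/n) z^n), which extends continuously to the closed unit disk since its Taylor coefficients c_n are nonnegative with Σ c_n ≤ 1. Then for every z in the closed unit disk with z ∉ {0,1}, |F(z)| < |z|^ℓ. -/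
/-!
Write `E z = exp (∑ aₙ zⁿ / n) = ∑ eₙ zⁿ`. Since `E' = (∑ a_{k+1} zᵏ) E`, the coefficients obey
`(n + 1) e_{n+1} = ∑_{k ≤ n} a_{k+1} e_{n-k}`, so for `a` positive and decreasing with `a₁ = 1`
the sequence `e` is nonnegative and nonincreasing, with `e₀ = 1`. Hence
`F z = 1 - (1 - z) E z = z ∑ (eₙ - e_{n+1}) zⁿ` has nonnegative coefficients of total mass at most
`1`, and this series is the continuous extension of `F` to the closed disk. As `a_k = 1` for
`k < ℓ`, its coefficients `cₙ` vanish for `n < ℓ` while `c_ℓ, c_{ℓ+1} > 0`, and the strict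
triangle inequality `|c_ℓ + c_{ℓ+1} z| < c_ℓ + c_{ℓ+1}` for `z ≠ 1` gives `|F z| < |z|^ℓ`.
-/

open Finset

theorem Antitone.summable_sub_succ {e : ℕ → ℝ} (he : Antitone e) (h0 : ∀ n, 0 ≤ e n) :
    Summable fun n => e n - e (n + 1) :=
  summable_of_sum_range_le (c := e 0) (fun n => sub_nonneg.2 (he n.le_succ)) fun N => by
    rw [sum_range_sub']
    linarith [h0 N]

theorem Antitone.tsum_sub_succ_le {e : ℕ → ℝ} (he : Antitone e) (h0 : ∀ n, 0 ≤ e n) :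
    ∑' n, (e n - e (n + 1)) ≤ e 0 :=
  Real.tsum_le_of_sum_range_le (fun n => sub_nonneg.2 (he n.le_succ)) fun N => by
    rw [sum_range_sub']
    linarith [h0 N]

theorem apply_le_apply_one {a : ℕ → ℝ} (ha_dec : ∀ n, 1 ≤ n → a (n + 1) ≤ a n) {n : ℕ}
    (hn : 1 ≤ n) : a n ≤ a 1 := by
  obtain ⟨k, rfl⟩ := Nat.exists_eq_add_of_le' hn
  exact antitone_nat_of_succ_le (f := fun n => a (n + 1)) (fun n => ha_dec (n + 1) (by omega))
    (Nat.zero_le k)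

theorem re_lt_one_of_norm_le_one {z : ℂ} (hz : ‖z‖ ≤ 1) (hz1 : z ≠ 1) : z.re < 1 := by
  refine (z.re_le_norm.trans hz).lt_of_ne fun h => hz1 (Complex.ext h ?_)
  exact Complex.abs_re_eq_norm.1
    (le_antisymm (Complex.abs_re_le_norm z) (by rw [h, abs_one]; exact hz))

theorem norm_add_mul_lt {p q : ℝ} (hp : 0 < p) (hq : 0 < q) {z : ℂ} (hz : ‖z‖ ≤ 1)
    (hz1 : z ≠ 1) :
    ‖(p : ℂ) + q * z‖ < p + q := by
  have hre := re_lt_one_of_norm_le_one hz hz1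
  have hnormSq : z.re * z.re + z.im * z.im ≤ 1 := by
    rw [← Complex.normSq_apply, Complex.normSq_eq_norm_sq]
    exact pow_le_one₀ (norm_nonneg z) hz
  have hsq : ‖(p : ℂ) + q * z‖ ^ 2 < (p + q) ^ 2 := by
    rw [Complex.sq_norm, Complex.normSq_apply]
    simp only [Complex.add_re, Complex.add_im, Complex.mul_re, Complex.mul_im,
      Complex.ofReal_re, Complex.ofReal_im, zero_mul, sub_zero, add_zero, zero_add]
    nlinarith [mul_pos hp hq, mul_pos hq hq]
  exact lt_of_pow_lt_pow_left₀ 2 (by positivity) hsq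

section PowerSeries

variable {c : ℕ → ℂ} {C : ℝ} {w : ℂ}

theorem summable_norm_mul_pow (hc : ∀ n, ‖c n‖ ≤ C) (hw : ‖w‖ < 1) :
    Summable fun n => ‖c n * w ^ n‖ :=
  ((summable_geometric_of_lt_one (norm_nonneg w) hw).mul_left C).of_nonneg_of_le
    (fun _ => norm_nonneg _) fun n => by
      rw [norm_mul, norm_pow]
      exact mul_le_mul_of_nonneg_right (hc n) (by positivity)

theorem hasDerivAt_tsum_mul_pow (hc : ∀ n, ‖c n‖ ≤ C) (hw : ‖w‖ < 1) :
    HasDerivAt (fun y => ∑' n, c n * y ^ n) (∑' n, c (n + 1) * ((n + 1) * w ^ n)) w := by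
  obtain ⟨r, hwr, hr1⟩ := exists_between hw
  have hr0 : 0 < r := (norm_nonneg w).trans_lt hwr
  have hu : Summable fun n : ℕ => C * (n * r ^ (n - 1)) := by
    refine Summable.mul_left C ?_
    rw [← summable_nat_add_iff 1]
    refine ((summable_pow_mul_geometric_of_norm_lt_one 1 (r := r) ?_).add
      (summable_geometric_of_lt_one hr0.le hr1)).congr fun n => ?_
    · rwa [Real.norm_of_nonneg hr0.le]
    · simp only [pow_one, Nat.add_sub_cancel, Nat.cast_add, Nat.cast_one]
      ring
  have hbound : ∀ n, ∀ y ∈ Metric.ball (0 : ℂ) r,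
      ‖c n * (n * y ^ (n - 1))‖ ≤ C * (n * r ^ (n - 1)) := by
    intro n y hy
    rw [norm_mul, norm_mul, norm_pow, Complex.norm_natCast]
    gcongr
    · exact (norm_nonneg _).trans (hc 0)
    · exact hc n
    · exact (mem_ball_zero_iff.1 hy).le
  have hderiv := hasDerivAt_tsum_of_isPreconnected hu Metric.isOpen_ball
    (convex_ball (0 : ℂ) r).isPreconnected (fun n y _ => (hasDerivAt_pow n y).const_mul (c n))
    hbound (Metric.mem_ball_self hr0)
    (hasSum_single 0 fun n hn => by simp [zero_pow hn]).summable (mem_ball_zero_iff.2 hwr)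
  refine hderiv.congr_deriv ?_
  rw [(Summable.of_norm_bounded hu fun n => hbound n w (mem_ball_zero_iff.2 hwr)).tsum_eq_zero_add]
  simp

theorem one_sub_mul_tsum_mul_pow (hc : ∀ n, ‖c n‖ ≤ C) (hw : ‖w‖ < 1) :
    (1 - w) * ∑' n, c n * w ^ n = c 0 - w * ∑' n, (c n - c (n + 1)) * w ^ n := by
  have h := (summable_norm_mul_pow hc hw).of_norm
  have h' := (summable_norm_mul_pow (fun n => hc (n + 1)) hw).of_norm
  have hshift : ∑' n, c n * w ^ n = c 0 + w * ∑' n, c (n + 1) * w ^ n := by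
    rw [h.tsum_eq_zero_add, ← tsum_mul_left]
    simp only [pow_zero, mul_one, pow_succ]
    congr 1
    exact tsum_congr fun n => by ring
  simp_rw [sub_mul]
  rw [h.tsum_sub h', hshift]
  ring

theorem continuousOn_tsum_mul_pow (hc : Summable fun n => ‖c n‖) :
    ContinuousOn (fun z => ∑' n, c n * z ^ n) (Metric.closedBall 0 1) :=
  continuousOn_tsum (fun n => (continuous_const.mul (continuous_pow n)).continuousOn) hc
    fun n z hz => by
      rw [norm_mul, norm_pow]
      exact mul_le_of_le_one_right (norm_nonneg _)
        (pow_le_one₀ (norm_nonneg z) (mem_closedBall_zero_iff.1 hz))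

end PowerSeries

section NonnegCoeff

variable {c : ℕ → ℝ} {z : ℂ}

theorem norm_ofReal_mul_pow_le (hc : ∀ n, 0 ≤ c n) (hz : ‖z‖ ≤ 1) (n : ℕ) :
    ‖(c n : ℂ) * z ^ n‖ ≤ c n := by
  rw [norm_mul, norm_pow, Complex.norm_real, Real.norm_of_nonneg (hc n)]
  exact mul_le_of_le_one_right (hc n) (pow_le_one₀ (norm_nonneg z) hz)

theorem norm_tsum_mul_pow_lt_tsum (hc : ∀ n, 0 ≤ c n) (hsum : Summable c) (h0 : 0 < c 0)
    (h1 : 0 < c 1) (hz : ‖z‖ ≤ 1) (hz1 : z ≠ 1) :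
    ‖∑' n, (c n : ℂ) * z ^ n‖ < ∑' n, c n := by
  have hbound := norm_ofReal_mul_pow_le hc hz
  have hs : Summable fun n => (c n : ℂ) * z ^ n := .of_norm_bounded hsum hbound
  rw [← hs.sum_add_tsum_nat_add 2, ← hsum.sum_add_tsum_nat_add 2]
  simp only [sum_range_succ, range_zero, sum_empty, zero_add, pow_zero, mul_one, pow_one]
  calc ‖(c 0 : ℂ) + c 1 * z + ∑' n, (c (n + 2) : ℂ) * z ^ (n + 2)‖
      ≤ ‖(c 0 : ℂ) + c 1 * z‖ + ‖∑' n, (c (n + 2) : ℂ) * z ^ (n + 2)‖ :=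
        norm_add_le _ _
    _ < c 0 + c 1 + ∑' n, c (n + 2) :=
        add_lt_add_of_lt_of_le (norm_add_mul_lt h0 h1 hz hz1)
          (tsum_of_norm_bounded ((summable_nat_add_iff 2).2 hsum).hasSum fun n => hbound _)

theorem norm_tsum_mul_pow_lt_pow (hc : ∀ n, 0 ≤ c n) (hsum : Summable c) (hle : ∑' n, c n ≤ 1)
    {ℓ : ℕ} (hzero : ∀ n < ℓ, c n = 0) (hℓ : 0 < c ℓ) (hℓ1 : 0 < c (ℓ + 1))
    (hz : ‖z‖ ≤ 1) (hz0 : z ≠ 0) (hz1 : z ≠ 1) :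
    ‖∑' n, (c n : ℂ) * z ^ n‖ < ‖z‖ ^ ℓ := by
  have hs : Summable fun n => (c n : ℂ) * z ^ n :=
    .of_norm_bounded hsum (norm_ofReal_mul_pow_le hc hz)
  have hfactor : ∑' n, (c n : ℂ) * z ^ n = z ^ ℓ * ∑' n, (c (n + ℓ) : ℂ) * z ^ n := by
    rw [← hs.sum_add_tsum_nat_add ℓ, sum_eq_zero fun n hn => by simp [hzero n (mem_range.1 hn)],
      zero_add, ← tsum_mul_left]
    exact tsum_congr fun n => by ring
  have hshift : ∑' n, c (n + ℓ) ≤ 1 := by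
    rw [← hsum.sum_add_tsum_nat_add ℓ] at hle
    linarith [sum_nonneg fun n (_ : n ∈ range ℓ) => hc n]
  rw [hfactor, norm_mul, norm_pow]
  refine mul_lt_of_lt_one_right (pow_pos (norm_pos_iff.2 hz0) ℓ) ?_
  refine (norm_tsum_mul_pow_lt_tsum (fun n => hc _) ((summable_nat_add_iff ℓ).2 hsum) ?_ ?_
    hz hz1).trans_le hshift
  · simpa using hℓ
  · simpa [add_comm] using hℓ1

end NonnegCoeff

noncomputable def expCoeff (a : ℕ → ℝ) : ℕ → ℝ
  | 0 => 1
  | n + 1 => (∑ k ∈ range (n + 1), a (k + 1) * expCoeff a (n - k)) / (n + 1)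

section expCoeff

variable (a : ℕ → ℝ)

@[simp]
theorem expCoeff_zero : expCoeff a 0 = 1 := by
  rw [expCoeff]

theorem succ_mul_expCoeff_succ (n : ℕ) :
    (n + 1 : ℝ) * expCoeff a (n + 1) =
      ∑ k ∈ range (n + 1), a (k + 1) * expCoeff a (n - k) := by
  rw [expCoeff]
  field_simp

theorem expCoeff_one : expCoeff a 1 = a 1 := by
  simpa using succ_mul_expCoeff_succ a 0

variable {a}

theorem expCoeff_nonneg (ha : ∀ n, 1 ≤ n → 0 ≤ a n) (n : ℕ) : 0 ≤ expCoeff a n := by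
  induction n using Nat.strong_induction_on with
  | _ n ih =>
    cases n with
    | zero => simp
    | succ n =>
      rw [expCoeff]
      exact div_nonneg
        (sum_nonneg fun k _ => mul_nonneg (ha _ (by omega)) (ih _ (by omega))) (by positivity)

theorem abs_expCoeff_le_one (ha : ∀ n, 1 ≤ n → |a n| ≤ 1) (n : ℕ) :
    |expCoeff a n| ≤ 1 := by
  induction n using Nat.strong_induction_on with
  | _ n ih =>
    cases n with
    | zero => simp
    | succ n =>
      have hsum : |∑ k ∈ range (n + 1), a (k + 1) * expCoeff a (n - k)| ≤ n + 1 :=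
        calc _ ≤ ∑ k ∈ range (n + 1), |a (k + 1) * expCoeff a (n - k)| :=
              abs_sum_le_sum_abs _ _
          _ ≤ ∑ k ∈ range (n + 1), (1 : ℝ) := sum_le_sum fun k _ => by
            rw [abs_mul]
            exact mul_le_one₀ (ha _ (by omega)) (abs_nonneg _) (ih _ (by omega))
          _ = n + 1 := by simp
      rw [← succ_mul_expCoeff_succ, abs_mul, abs_of_pos (by positivity)] at hsum
      exact (mul_le_iff_le_one_right (by positivity)).1 hsum

theorem succ_succ_mul_expCoeff_sub (ha1 : a 1 = 1) (n : ℕ) :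
    (n + 2 : ℝ) * (expCoeff a (n + 1) - expCoeff a (n + 2)) =
      ∑ j ∈ range (n + 1), (a (j + 1) - a (j + 2)) * expCoeff a (n - j) := by
  have h1 := succ_mul_expCoeff_succ a n
  have h2 := succ_mul_expCoeff_succ a (n + 1)
  rw [sum_range_succ'] at h2
  simp only [Nat.sub_zero, ha1, one_mul, Nat.add_sub_add_right] at h2
  simp only [sub_mul, sum_sub_distrib]
  push_cast at h2
  linarith

theorem expCoeff_antitone (ha : ∀ n, 1 ≤ n → 0 ≤ a n)
    (ha_dec : ∀ n, 1 ≤ n → a (n + 1) ≤ a n) (ha1 : a 1 = 1) : Antitone (expCoeff a) := by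
  refine antitone_nat_of_succ_le fun n => ?_
  cases n with
  | zero => simp [expCoeff_one, ha1]
  | succ n =>
    have hsum : 0 ≤ ∑ j ∈ range (n + 1), (a (j + 1) - a (j + 2)) * expCoeff a (n - j) :=
      sum_nonneg fun j _ => mul_nonneg (sub_nonneg.2 (ha_dec _ (by omega))) (expCoeff_nonneg ha _)
    rw [← succ_succ_mul_expCoeff_sub ha1] at hsum
    linarith [nonneg_of_mul_nonneg_right hsum (by positivity)]

theorem expCoeff_eq_one {m : ℕ} (hone : ∀ k, 1 ≤ k → k ≤ m → a k = 1) {n : ℕ}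
    (hn : n ≤ m) :
    expCoeff a n = 1 := by
  induction n using Nat.strong_induction_on with
  | _ n ih =>
    cases n with
    | zero => simp
    | succ n =>
      have h := succ_mul_expCoeff_succ a n
      rw [sum_congr rfl fun k hk => by
        rw [hone (k + 1) (by omega) (by have := mem_range.1 hk; omega),
          ih (n - k) (by omega) (by omega), one_mul]] at h
      simp only [sum_const, card_range, nsmul_eq_mul, mul_one] at h
      push_cast at h
      exact (mul_eq_left₀ (by positivity)).1 h

theorem expCoeff_succ_lt {m : ℕ} (hone : ∀ k, 1 ≤ k → k ≤ m → a k = 1) (ham : a (m + 1) < 1) :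
    expCoeff a (m + 1) < expCoeff a m := by
  have h := succ_mul_expCoeff_succ a m
  rw [sum_range_succ, sum_congr rfl fun k hk => by
    rw [hone (k + 1) (by omega) (by have := mem_range.1 hk; omega),
      expCoeff_eq_one hone (Nat.sub_le m k), one_mul]] at h
  simp only [sum_const, card_range, nsmul_eq_mul, mul_one, Nat.sub_self, expCoeff_zero] at h
  have hm : (0 : ℝ) < m + 1 := by positivity
  rw [expCoeff_eq_one hone le_rfl]
  nlinarith

theorem expCoeff_succ_succ_lt {m : ℕ} (hm : 1 ≤ m) (ha : ∀ n, 1 ≤ n → 0 ≤ a n)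
    (ha_dec : ∀ n, 1 ≤ n → a (n + 1) ≤ a n)
    (hone : ∀ k, 1 ≤ k → k ≤ m → a k = 1) (ham : a (m + 1) < 1) :
    expCoeff a (m + 2) < expCoeff a (m + 1) := by
  obtain ⟨k, rfl⟩ := Nat.exists_eq_add_of_le' hm
  have ha1 := hone 1 le_rfl hm
  have hterm : (a (k + 1) - a (k + 2)) * expCoeff a (k + 1 - k) = 1 - a (k + 2) := by
    rw [hone (k + 1) hm le_rfl, Nat.add_sub_cancel_left, expCoeff_one, ha1, mul_one]
  have hsingle := single_le_sum (f := fun j => (a (j + 1) - a (j + 2)) * expCoeff a (k + 1 - j))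
    (fun j _ => mul_nonneg (sub_nonneg.2 (ha_dec _ (by omega))) (expCoeff_nonneg ha _))
    (mem_range.2 (by omega : k < k + 1 + 1))
  rw [hterm, ← succ_succ_mul_expCoeff_sub ha1] at hsingle
  have hk : (0 : ℝ) < k + 1 + 2 := by positivity
  nlinarith

end expCoeff

section ExpSeries

variable {a : ℕ → ℝ} {w : ℂ}

theorem hasDerivAt_tsum_expCoeff_mul_pow (ha : ∀ n, 1 ≤ n → |a n| ≤ 1) (hw : ‖w‖ < 1) :
    HasDerivAt (fun y => ∑' n, (expCoeff a n : ℂ) * y ^ n)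
      ((∑' n, (a (n + 1) : ℂ) * w ^ n) * ∑' n, (expCoeff a n : ℂ) * w ^ n) w := by
  have he : ∀ n, ‖(expCoeff a n : ℂ)‖ ≤ 1 := fun n => by
    simpa using abs_expCoeff_le_one ha n
  have ha' : ∀ n, ‖(a (n + 1) : ℂ)‖ ≤ 1 := fun n => by
    simpa using ha (n + 1) (by omega)
  refine (hasDerivAt_tsum_mul_pow he hw).congr_deriv ?_
  rw [tsum_mul_tsum_eq_tsum_sum_range_of_summable_norm (summable_norm_mul_pow ha' hw)
    (summable_norm_mul_pow he hw)]
  refine tsum_congr fun n => ?_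
  calc (expCoeff a (n + 1) : ℂ) * ((n + 1) * w ^ n)
      = ((∑ k ∈ range (n + 1), a (k + 1) * expCoeff a (n - k) : ℝ) : ℂ) * w ^ n := by
        rw [← succ_mul_expCoeff_succ]
        push_cast
        ring
    _ = _ := by
        push_cast
        rw [sum_mul]
        refine sum_congr rfl fun k hk => ?_
        rw [← pow_mul_pow_sub w (Nat.le_of_lt_succ (mem_range.1 hk))]
        ring

theorem hasDerivAt_tsum_div_mul_pow_succ (ha : ∀ n, 1 ≤ n → |a n| ≤ 1) (hw : ‖w‖ < 1) :
    HasDerivAt (fun y => ∑' n : ℕ, (a (n + 1) / (n + 1) : ℂ) * y ^ (n + 1))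
      (∑' n, (a (n + 1) : ℂ) * w ^ n) w := by
  -- `c 0 = a 0 / 0 = 0`, so `∑ c n * yⁿ` is the given series reindexed.
  set c : ℕ → ℂ := fun n => a n / n
  have hc : ∀ n, ‖c n‖ ≤ 1 := by
    rintro (_ | n)
    · simp [c]
    · rw [norm_div, Complex.norm_real, Complex.norm_natCast]
      exact div_le_one_of_le₀ ((ha _ (by omega)).trans (by simp)) (by positivity)
  have hshift : (fun y => ∑' n : ℕ, (a (n + 1) / (n + 1) : ℂ) * y ^ (n + 1)) =
      fun y => ∑' n, c n * y ^ n := by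
    funext y
    refine (tsum_congr fun n => ?_).trans
      (Nat.succ_injective.tsum_eq (f := fun n => c n * y ^ n) fun n hn => ?_)
    · simp [c]
    · obtain ⟨k, rfl⟩ := Nat.exists_eq_succ_of_ne_zero (n := n) (by rintro rfl; simp [c] at hn)
      exact ⟨k, rfl⟩
  rw [hshift]
  refine (hasDerivAt_tsum_mul_pow hc hw).congr_deriv (tsum_congr fun n => ?_)
  simp only [c]
  push_cast
  field_simp

theorem exp_tsum_eq_tsum_expCoeff_mul_pow (ha : ∀ n, 1 ≤ n → |a n| ≤ 1) {z : ℂ}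
    (hz : ‖z‖ < 1) :
    Complex.exp (∑' n : ℕ, (a (n + 1) / (n + 1) : ℂ) * z ^ (n + 1)) =
      ∑' n, (expCoeff a n : ℂ) * z ^ n := by
  set g := fun y : ℂ => ∑' n : ℕ, (a (n + 1) / (n + 1) : ℂ) * y ^ (n + 1)
  set S := fun y : ℂ => ∑' n, (expCoeff a n : ℂ) * y ^ n
  have hφ : ∀ w ∈ Metric.ball (0 : ℂ) 1,
      HasDerivAt (fun y => S y * Complex.exp (-g y)) 0 w :=
    fun w hw => by
      have hw' := mem_ball_zero_iff.1 hw
      exact ((hasDerivAt_tsum_expCoeff_mul_pow ha hw').mul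
        (hasDerivAt_tsum_div_mul_pow_succ ha hw').neg.cexp).congr_deriv (by ring)
  have hconst := Metric.isOpen_ball.is_const_of_deriv_eq_zero
    (convex_ball (0 : ℂ) 1).isPreconnected
    (fun w hw => (hφ w hw).differentiableAt.differentiableWithinAt) (fun w hw => (hφ w hw).deriv)
    (mem_ball_zero_iff.2 hz) (Metric.mem_ball_self one_pos)
  have hS0 : S 0 = 1 := by
    simp only [S]
    rw [tsum_eq_single 0 fun n hn => by simp [zero_pow hn]]
    simp
  have hg0 : g 0 = 0 := by simp [g]
  rw [hS0, hg0, neg_zero, Complex.exp_zero, mul_one, Complex.exp_neg,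
    mul_inv_eq_one₀ (Complex.exp_ne_zero _)] at hconst
  exact hconst.symm

theorem one_sub_one_sub_mul_exp_tsum (ha : ∀ n, 1 ≤ n → |a n| ≤ 1) {z : ℂ}
    (hz : ‖z‖ < 1) :
    1 - (1 - z) * Complex.exp (∑' n : ℕ, (a (n + 1) / (n + 1) : ℂ) * z ^ (n + 1)) =
      z * ∑' n, ((expCoeff a n - expCoeff a (n + 1) : ℝ) : ℂ) * z ^ n := by
  have he : ∀ n, ‖(expCoeff a n : ℂ)‖ ≤ 1 := fun n => by
    simpa using abs_expCoeff_le_one ha n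
  rw [exp_tsum_eq_tsum_expCoeff_mul_pow ha hz, one_sub_mul_tsum_mul_pow he hz]
  push_cast
  simp

end ExpSeries

theorem stmt_5_general (a : ℕ → ℝ) (ℓ : ℕ) (F : ℂ → ℂ)
    (ha_pos : ∀ n, 1 ≤ n → 0 < a n)
    (ha_dec : ∀ n, 1 ≤ n → a (n + 1) ≤ a n)
    (ha1 : a 1 = 1)
    (hl : IsLeast {k : ℕ | 1 ≤ k ∧ a k < 1} ℓ)
    (hF_cont : ContinuousOn F (Metric.closedBall (0 : ℂ) 1))
    (hF : ∀ z : ℂ, ‖z‖ < 1 →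
      F z = 1 - (1 - z) * Complex.exp (∑' n : ℕ, (a (n + 1) / (n + 1) : ℂ) * z ^ (n + 1))) :
    ∀ z : ℂ, ‖z‖ ≤ 1 → z ≠ 0 → z ≠ 1 → ‖F z‖ < ‖z‖ ^ ℓ := by
  obtain ⟨⟨hℓ1, haℓ⟩, hℓmin⟩ := hl
  have ha_nonneg : ∀ n, 1 ≤ n → 0 ≤ a n := fun n hn => (ha_pos n hn).le
  have ha_le : ∀ n, 1 ≤ n → a n ≤ 1 := fun n hn => ha1 ▸ apply_le_apply_one ha_dec hn
  have ha_abs : ∀ n, 1 ≤ n → |a n| ≤ 1 := fun n hn =>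
    (abs_of_pos (ha_pos n hn)).trans_le (ha_le n hn)
  obtain ⟨m, rfl⟩ : ∃ m, ℓ = m + 1 := ⟨ℓ - 1, by omega⟩
  have hm : 1 ≤ m := Nat.one_le_iff_ne_zero.2 fun h => by simp [h, ha1] at haℓ
  have hone : ∀ k, 1 ≤ k → k ≤ m → a k = 1 := fun k hk hkm =>
    (ha_le k hk).antisymm (not_lt.1 fun h => by have := hℓmin ⟨hk, h⟩; omega)
  have hanti := expCoeff_antitone ha_nonneg ha_dec ha1
  set d : ℕ → ℝ := fun n => expCoeff a n - expCoeff a (n + 1)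
  have hd_nonneg : ∀ n, 0 ≤ d n := fun n => sub_nonneg.2 (hanti n.le_succ)
  have hd_sum : Summable d := hanti.summable_sub_succ (expCoeff_nonneg ha_nonneg)
  have hd_le : ∑' n, d n ≤ 1 := by
    simpa using hanti.tsum_sub_succ_le (expCoeff_nonneg ha_nonneg)
  have hd_zero : ∀ n < m, d n = 0 := fun n hn => by
    simp [d, expCoeff_eq_one hone hn.le, expCoeff_eq_one hone hn]
  have hdm : 0 < d m := sub_pos.2 (expCoeff_succ_lt hone haℓ)
  have hdm1 : 0 < d (m + 1) := sub_pos.2 (expCoeff_succ_succ_lt hm ha_nonneg ha_dec hone haℓ)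
  have hFG : Set.EqOn F (fun z => z * ∑' n, (d n : ℂ) * z ^ n) (Metric.closedBall 0 1) :=
    Set.EqOn.of_subset_closure
      (fun z hz => (hF z (mem_ball_zero_iff.1 hz)).trans
        (one_sub_one_sub_mul_exp_tsum ha_abs (mem_ball_zero_iff.1 hz)))
      hF_cont (continuousOn_id.mul (continuousOn_tsum_mul_pow (hd_sum.congr fun n => by
        simp [abs_of_nonneg (hd_nonneg n)])))
      Metric.ball_subset_closedBall (closure_ball 0 one_ne_zero).ge
  intro z hz hz0 hz1
  rw [hFG (mem_closedBall_zero_iff.2 hz), norm_mul, pow_succ']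
  exact mul_lt_mul_of_pos_left
    (norm_tsum_mul_pow_lt_pow hd_nonneg hd_sum hd_le hd_zero hdm hdm1 hz hz0 hz1)
    (norm_pos_iff.2 hz0)

theorem stmt_5 (a : ℕ → ℝ) (ℓ : ℕ) (F : ℂ → ℂ)
    (ha_pos : ∀ n, 1 ≤ n → 0 < a n)
    (ha_dec : ∀ n, 1 ≤ n → a (n + 1) ≤ a n)
    (ha1 : a 1 = 1)
    (ha_nonconst : ∃ k, 1 ≤ k ∧ a k < 1)
    (hl : IsLeast {k : ℕ | 1 ≤ k ∧ a k < 1} ℓ)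
    (hF_cont : ContinuousOn F (Metric.closedBall (0 : ℂ) 1))
    (hF : ∀ z : ℂ, ‖z‖ < 1 →
      F z = 1 - (1 - z) * Complex.exp (∑' n : ℕ, (a (n + 1) / (n + 1) : ℂ) * z ^ (n + 1))) :
    ∀ z : ℂ, ‖z‖ ≤ 1 → z ≠ 0 → z ≠ 1 → ‖F z‖ < ‖z‖ ^ ℓ :=
  stmt_5_general a ℓ F ha_pos ha_dec ha1 hl hF_cont hF
end

section
/- Let p ≥ 2 be an integer and let (N_k) be the Newton residuals N_k(z) = 1 - (1-z)/U_k(z)^p with U_0 ≡ 1 and U_{k+1} = ((p-1)U_k + (1-z)/U_k^{p-1})/p. Then for every k ≥ 1 and every z in the closed unit disk with z ∉ {0,1}, |N_k(z)| < |z|^{2^k}; in particular U_k has no zeros and no poles in the closed unit disk. -/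
/-!
Put `a = 1 - w / p`, so that `f_p(w) = 1 - (1 - w) / a ^ p`. Then
`a ^ p - (1 - w) = (w / p) ^ 2 * ∑_{j < p} ∑_{i < j} a ^ i`, a polynomial in `a` with nonnegative
coefficients, so its norm is at most `(|w| / p) ^ 2` times the same double sum at `ρ = |a|`.
Termwise, that double sum divided by `ρ ^ p` is strictly decreasing in `ρ`, and at
`ρ = (p - 1) / p` it equals `p ^ 2`. Since `|a| > (p - 1) / p` on the closed unit disk minus `1`,
this gives `|a ^ p - (1 - w)| < |w| ^ 2 |a| ^ p`, i.e. `|f_p(w)| < |w| ^ 2`.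
Finally `U_{k+1} = U_k (1 - N_k / p)` and `N_{k+1} = f_p(N_k)`, so the bound iterates.
-/

open Finset

def geomSumSum {R : Type*} [Semiring R] (x : R) (n : ℕ) : R :=
  ∑ j ∈ range n, ∑ i ∈ range j, x ^ i

theorem one_sub_sq_mul_geomSumSum {R : Type*} [CommRing R] (x : R) (n : ℕ) :
    (1 - x) ^ 2 * geomSumSum x n = x ^ n - 1 + n * (1 - x) := by
  induction n with
  | zero => simp [geomSumSum]
  | succ n ih =>
    rw [geomSumSum, sum_range_succ, mul_add, ← geomSumSum, ih]
    push_cast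
    linear_combination -(1 - x) * geom_sum_mul x n

theorem norm_geomSumSum_le {R : Type*} [SeminormedRing R] [NormOneClass R] (x : R) (n : ℕ) :
    ‖geomSumSum x n‖ ≤ geomSumSum ‖x‖ n :=
  (norm_sum_le _ _).trans <| sum_le_sum fun _ _ =>
    (norm_sum_le _ _).trans <| sum_le_sum fun i _ => norm_pow_le x i

theorem geomSumSum_sub_one_div (n : ℕ) (hn : n ≠ 0) :
    geomSumSum (((n : ℝ) - 1) / n) n = n ^ 2 * (((n : ℝ) - 1) / n) ^ n := by
  have hn' : (n : ℝ) ≠ 0 := Nat.cast_ne_zero.2 hn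
  have key := one_sub_sq_mul_geomSumSum (((n : ℝ) - 1) / n) n
  have h1 : 1 - ((n : ℝ) - 1) / n = 1 / n := by field_simp; ring
  rw [h1, mul_one_div_cancel hn', sub_add_cancel] at key
  field_simp at key ⊢
  linarith

theorem pow_mul_geomSumSum_lt {n : ℕ} (hn : 2 ≤ n) {r ρ : ℝ} (hr : 0 < r) (hrρ : r < ρ) :
    r ^ n * geomSumSum ρ n < ρ ^ n * geomSumSum r n := by
  have hterm : ∀ i ≤ n, r ^ n * ρ ^ i ≤ ρ ^ n * r ^ i := fun i hi => by
    rw [← Nat.sub_add_cancel hi, pow_add, pow_add]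
    have := mul_le_mul_of_nonneg_right (pow_le_pow_left₀ hr.le hrρ.le (n - i))
      (mul_pos (pow_pos hr i) (pow_pos (hr.trans hrρ) i)).le
    linarith
  simp only [geomSumSum, mul_sum]
  refine sum_lt_sum (fun j hj => sum_le_sum fun i hi => hterm i ?_) ⟨1, mem_range.2 hn, ?_⟩
  · have := mem_range.1 hj; have := mem_range.1 hi; omega
  · simpa using pow_lt_pow_left₀ hrρ hr.le (by omega : n ≠ 0)

theorem geomSumSum_lt {n : ℕ} (hn : 2 ≤ n) {ρ : ℝ} (hρ : ((n : ℝ) - 1) / n < ρ) :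
    geomSumSum ρ n < n ^ 2 * ρ ^ n := by
  have hr : 0 < ((n : ℝ) - 1) / n := by
    have : (2 : ℝ) ≤ n := by exact_mod_cast hn
    apply div_pos <;> linarith
  have := pow_mul_geomSumSum_lt hn hr hρ
  rw [geomSumSum_sub_one_div n (by omega)] at this
  nlinarith [pow_pos hr n]

open scoped ComplexOrder in
theorem Complex.re_lt_one_of_norm_le_one {w : ℂ} (hw : ‖w‖ ≤ 1) (h1 : w ≠ 1) : w.re < 1 := by
  refine (re_le_norm w |>.trans hw).lt_of_ne fun hre => h1 ?_
  have hnn : 0 ≤ w := re_eq_norm.1 (hre.trans (hw.antisymm (hre ▸ re_le_norm w)).symm)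
  exact ext hre (nonneg_iff.1 hnn).2.symm

theorem Complex.sub_one_div_lt_norm_one_sub_div {w : ℂ} (hw : ‖w‖ ≤ 1) (h1 : w ≠ 1)
    {x : ℝ} (hx : 0 < x) : (x - 1) / x < ‖1 - w / x‖ := by
  have : 1 - w / x = (x - w) / x := by
    field_simp [ofReal_ne_zero.2 hx.ne']
  rw [this, norm_div, norm_real, Real.norm_of_nonneg hx.le, div_lt_div_iff_of_pos_right hx]
  calc x - 1 < (x - w).re := by simpa using re_lt_one_of_norm_le_one hw h1
    _ ≤ ‖(x : ℂ) - w‖ := re_le_norm _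

theorem pow_one_sub_div_sub_one_sub {K : Type*} [Field K] {p : ℕ} (hp : (p : K) ≠ 0) (w : K) :
    (1 - w / p) ^ p - (1 - w) = (w / p) ^ 2 * geomSumSum (1 - w / p) p := by
  have key := one_sub_sq_mul_geomSumSum (1 - w / p) p
  rw [sub_sub_cancel, mul_div_cancel₀ w hp] at key
  rw [key]
  ring

noncomputable def newtonMap (p : ℕ) (w : ℂ) : ℂ := 1 - (1 - w) / (1 - w / p) ^ p

theorem norm_newtonMap_lt {p : ℕ} (hp : 2 ≤ p) {w : ℂ} (hw : ‖w‖ ≤ 1) (h0 : w ≠ 0) (h1 : w ≠ 1) :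
    ‖newtonMap p w‖ < ‖w‖ ^ 2 := by
  have hp₂ : (2 : ℝ) ≤ p := by exact_mod_cast hp
  have hp₀ : (0 : ℝ) < p := by positivity
  set a := 1 - w / p
  have ha : ((p : ℝ) - 1) / p < ‖a‖ := by
    simpa using Complex.sub_one_div_lt_norm_one_sub_div hw h1 hp₀
  have ha₀ : 0 < ‖a‖ := lt_of_le_of_lt (div_nonneg (by linarith) hp₀.le) ha
  have hnum : ‖a ^ p - (1 - w)‖ < ‖w‖ ^ 2 * ‖a‖ ^ p := calc
    ‖a ^ p - (1 - w)‖ = (‖w‖ / p) ^ 2 * ‖geomSumSum a p‖ := by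
      rw [pow_one_sub_div_sub_one_sub (Nat.cast_ne_zero.2 (by omega)), norm_mul, norm_pow, norm_div,
        Complex.norm_natCast]
    _ ≤ (‖w‖ / p) ^ 2 * geomSumSum ‖a‖ p := by gcongr; exact norm_geomSumSum_le a p
    _ < (‖w‖ / p) ^ 2 * (p ^ 2 * ‖a‖ ^ p) := by
      have : 0 < ‖w‖ := norm_pos_iff.2 h0
      gcongr
      exact geomSumSum_lt hp ha
    _ = ‖w‖ ^ 2 * ‖a‖ ^ p := by field_simp
  rwa [newtonMap, one_sub_div (pow_ne_zero p (norm_pos_iff.1 ha₀)), norm_div, norm_pow,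
    div_lt_iff₀ (by positivity)]

theorem norm_newtonMap_lt_sq_of_norm_le {p : ℕ} (hp : 2 ≤ p) {w : ℂ} (hw : ‖w‖ ≤ 1) (h1 : w ≠ 1)
    {t : ℝ} (ht : 0 < t) (hwt : ‖w‖ ≤ t) : ‖newtonMap p w‖ < t ^ 2 := by
  rcases eq_or_ne w 0 with rfl | h0
  · simpa [newtonMap] using pow_pos ht 2
  · exact (norm_newtonMap_lt hp hw h0 h1).trans_le (by gcongr)

section Iteration

variable {p : ℕ} {z : ℂ} {U N : ℕ → ℂ}

theorem newton_succ_eq_mul (hp : p ≠ 0)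
    (hU : ∀ k, U (k + 1) = ((p - 1) * U k + (1 - z) / U k ^ (p - 1)) / p)
    (hN : ∀ k, N k = 1 - (1 - z) / U k ^ p) {k : ℕ} (hk : U k ≠ 0) :
    U (k + 1) = U k * (1 - N k / p) := by
  have hpow : U k ^ p = U k * U k ^ (p - 1) := by rw [← pow_succ']; congr; omega
  rw [hU, hN, hpow]
  field_simp
  ring

theorem residual_succ_eq_newtonMap (hp : p ≠ 0)
    (hU : ∀ k, U (k + 1) = ((p - 1) * U k + (1 - z) / U k ^ (p - 1)) / p)
    (hN : ∀ k, N k = 1 - (1 - z) / U k ^ p) {k : ℕ} (hk : U k ≠ 0) :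
    N (k + 1) = newtonMap p (N k) := by
  rw [hN (k + 1), newton_succ_eq_mul hp hU hN hk, mul_pow, ← div_div, newtonMap, hN k,
    sub_sub_cancel]

theorem residual_step (hp : 2 ≤ p)
    (hU : ∀ k, U (k + 1) = ((p - 1) * U k + (1 - z) / U k ^ (p - 1)) / p)
    (hN : ∀ k, N k = 1 - (1 - z) / U k ^ p) (hz : ‖z‖ ≤ 1) (hz0 : z ≠ 0) (hz1 : z ≠ 1)
    {k : ℕ} (hUk : U k ≠ 0) (hNk : ‖N k‖ ≤ ‖z‖ ^ 2 ^ k) :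
    U (k + 1) ≠ 0 ∧ ‖N (k + 1)‖ < ‖z‖ ^ 2 ^ (k + 1) := by
  have hp₀ : p ≠ 0 := by omega
  have hNk_le : ‖N k‖ ≤ 1 := hNk.trans (pow_le_one₀ (norm_nonneg z) hz)
  have hNk_ne : N k ≠ 1 := by
    rw [hN, Ne, sub_eq_self, div_eq_zero_iff, sub_eq_zero, not_or]
    exact ⟨Ne.symm hz1, pow_ne_zero p hUk⟩
  have hfac : 1 - N k / p ≠ 0 := by
    have := Complex.sub_one_div_lt_norm_one_sub_div hNk_le hNk_ne (x := p) (by positivity)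
    refine norm_pos_iff.1 (lt_of_le_of_lt ?_ (by simpa using this))
    have : (2 : ℝ) ≤ p := by exact_mod_cast hp
    exact div_nonneg (by linarith) (by linarith)
  refine ⟨newton_succ_eq_mul hp₀ hU hN hUk ▸ mul_ne_zero hUk hfac, ?_⟩
  rw [residual_succ_eq_newtonMap hp₀ hU hN hUk, pow_succ, pow_mul]
  exact norm_newtonMap_lt_sq_of_norm_le hp hNk_le hNk_ne (by positivity) hNk

theorem residual_bound (hp : 2 ≤ p) (hU0 : U 0 = 1)
    (hU : ∀ k, U (k + 1) = ((p - 1) * U k + (1 - z) / U k ^ (p - 1)) / p)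
    (hN : ∀ k, N k = 1 - (1 - z) / U k ^ p) (hz : ‖z‖ ≤ 1) (hz0 : z ≠ 0) (hz1 : z ≠ 1) :
    ∀ k, U k ≠ 0 ∧ ‖N k‖ ≤ ‖z‖ ^ 2 ^ k
  | 0 => by simp [hU0, hN]
  | k + 1 =>
    have ⟨hUk, hNk⟩ := residual_bound hp hU0 hU hN hz hz0 hz1 k
    have ⟨hUk', hNk'⟩ := residual_step hp hU hN hz hz0 hz1 hUk hNk
    ⟨hUk', hNk'.le⟩

end Iteration

theorem stmt_13 (p : ℕ) (hp : 2 ≤ p) (U : ℕ → ℂ → ℂ) (N : ℕ → ℂ → ℂ)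
    (hU0 : ∀ z, U 0 z = 1)
    (hU : ∀ k z, U (k + 1) z =
      ((p - 1) * U k z + (1 - z) / (U k z) ^ (p - 1)) / p)
    (hN : ∀ k z, N k z = 1 - (1 - z) / (U k z) ^ p) :
    ∀ k, 1 ≤ k → ∀ z : ℂ, ‖z‖ ≤ 1 → z ≠ 0 → z ≠ 1 →
      ‖N k z‖ < ‖z‖ ^ (2 ^ k) ∧ ∀ j ≤ k, U j z ≠ 0 := by
  intro k hk z hz hz0 hz1
  have hbound := residual_bound hp (hU0 z) (fun k => hU k z) (fun k => hN k z) hz hz0 hz1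
  obtain ⟨m, rfl⟩ := Nat.exists_eq_add_of_le' hk
  exact ⟨(residual_step hp (fun k => hU k z) (fun k => hN k z) hz hz0 hz1
    (hbound m).1 (hbound m).2).2, fun j _ => (hbound j).1⟩
end

section
/- Let p ≥ 2 be an integer and let (H_k) be the Halley residuals H_k(z) = 1 - (1-z)/V_k(z)^p with V_0 ≡ 1 and V_{k+1} = V_k·((p-1)V_k^p + (p+1)(1-z))/((p+1)V_k^p + (p-1)(1-z)). Then for every k ≥ 1 and every z in the closed unit disk with z ∉ {0,1}, |H_k(z)| < |z|^{3^k}; in particular V_k has no zeros and no poles in the closed unit disk. -/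
/-!
Put `β = (p² - 1) / (4p²)`. The function `((2p - (p - 1)z) / (2p - (p + 1)z))^p` and the power
series `∑ eₙ zⁿ` with `e₀ = e₁ = 1`, `eₙ₊₂ = eₙ₊₁ - β n / (n + 2) eₙ` both solve
`(1 - z + βz²) f' = f`, `f 0 = 1`, so they agree on the unit disk. As `β ≤ 1/4`, the `eₙ` decrease
to `0`; hence `g_p(w) = 1 - (1 - w) ∑ eₙ wⁿ = w³ ∑ γₖ wᵏ` with `γₖ = eₖ₊₂ - eₖ₊₃ > 0` and
`∑ γₖ = 1`, and the strict triangle inequality gives `|g_p(w)| < |w|³` for `|w| ≤ 1`,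
`w ∉ {0, 1}`. A Halley step sends the residual `w = 1 - (1 - z) / Vᵖ` to `g_p(w)`, so the bound
`|H_k(z)| < |z|^(3^k)` follows by induction, and along the way no `V_k` or denominator vanishes.
-/

open Filter Finset Metric

lemma summable_nat_mul_pow_pred {r : ℝ} (hr0 : 0 ≤ r) (hr1 : r < 1) :
    Summable fun n : ℕ => (n : ℝ) * r ^ (n - 1) := by
  refine (summable_nat_add_iff 1).1 ?_
  simpa [add_mul] using ((summable_pow_mul_geometric_of_norm_lt_one 1
    (by rwa [Real.norm_of_nonneg hr0])).add (summable_geometric_of_lt_one hr0 hr1))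

theorem eqOn_of_hasDerivAt_mul_self {𝕜 : Type*} [RCLike 𝕜] {s : Set 𝕜} (hs : IsOpen s)
    (hs' : IsPreconnected s) {f g a : 𝕜 → 𝕜} (hf : ∀ y ∈ s, HasDerivAt f (a y * f y) y)
    (hg : ∀ y ∈ s, HasDerivAt g (a y * g y) y) (hg0 : ∀ y ∈ s, g y ≠ 0) {x₀ : 𝕜} (hx₀ : x₀ ∈ s)
    (h : f x₀ = g x₀) : Set.EqOn f g s := by
  have hq : ∀ y ∈ s, HasDerivAt (fun x => f x / g x) 0 y := fun y hy =>
    ((hf y hy).div (hg y hy) (hg0 y hy)).congr_deriv (by ring)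
  intro x hx
  have hconst := hs.is_const_of_deriv_eq_zero hs'
    (fun y hy => (hq y hy).differentiableAt.differentiableWithinAt) (fun y hy => (hq y hy).deriv)
    hx hx₀
  rwa [h, div_self (hg0 x₀ hx₀), div_eq_one_iff_eq (hg0 x hx)] at hconst

lemma ofReal_sub_mul_ne_zero {a c : ℝ} (h : |c| < a) {z : ℂ} (hz : ‖z‖ ≤ 1) :
    (a : ℂ) - c * z ≠ 0 := by
  rw [sub_ne_zero]
  apply_fun (‖·‖)
  rw [norm_mul, Complex.norm_real, Complex.norm_real, Real.norm_eq_abs, Real.norm_eq_abs]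
  nlinarith [abs_nonneg c, le_abs_self a]

lemma norm_ofReal_add_ofReal_mul_lt {a b : ℝ} (ha : 0 < a) (hb : 0 < b) {z : ℂ} (hz : ‖z‖ ≤ 1)
    (hz1 : z ≠ 1) : ‖(a : ℂ) + b * z‖ < a + b := by
  have hre : z.re < 1 := by
    refine (z.re_le_norm.trans hz).lt_of_ne fun h => hz1 ?_
    have hsq := Complex.sq_norm z
    rw [Complex.normSq_apply] at hsq
    have him : z.im = 0 := by nlinarith [norm_nonneg z]
    exact Complex.ext h him
  have hsq : ‖(a : ℂ) + b * z‖ ^ 2 = a ^ 2 + 2 * a * b * z.re + b ^ 2 * ‖z‖ ^ 2 := by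
    rw [Complex.sq_norm, Complex.sq_norm, Complex.normSq_apply, Complex.normSq_apply]
    simp only [Complex.add_re, Complex.ofReal_re, Complex.mul_re, Complex.ofReal_im, zero_mul,
      sub_zero, Complex.add_im, Complex.mul_im, add_zero, zero_add]
    ring
  refine lt_of_pow_lt_pow_left₀ 2 (by positivity) ?_
  rw [hsq]
  nlinarith [mul_pos ha hb, pow_le_one₀ (n := 2) (norm_nonneg z) hz]

theorem norm_tsum_mul_pow_lt_one {γ : ℕ → ℝ} (hγ : ∀ k, 0 ≤ γ k) (hsum : HasSum γ 1)
    (h₀ : 0 < γ 0) (h₁ : 0 < γ 1) {z : ℂ} (hz : ‖z‖ ≤ 1) (hz1 : z ≠ 1) :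
    ‖∑' k, (γ k : ℂ) * z ^ k‖ < 1 := by
  have hnorm : ∀ k, ‖(γ k : ℂ) * z ^ k‖ ≤ γ k := fun k => by
    rw [norm_mul, norm_pow, Complex.norm_real, Real.norm_of_nonneg (hγ k)]
    exact mul_le_of_le_one_right (hγ k) (pow_le_one₀ (norm_nonneg z) hz)
  have hsplit : ∑' k, (γ k : ℂ) * z ^ k
      = (γ 0 + γ 1 * z) + ∑' k, (γ (k + 2) : ℂ) * z ^ (k + 2) := by
    rw [← (Summable.of_norm_bounded hsum.summable hnorm).sum_add_tsum_nat_add 2]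
    simp [sum_range_succ]
  have htail : ‖∑' k, (γ (k + 2) : ℂ) * z ^ (k + 2)‖ ≤ 1 - (γ 0 + γ 1) :=
    tsum_of_norm_bounded (by simpa [sum_range_succ] using (hasSum_nat_add_iff' 2).2 hsum)
      fun k => hnorm (k + 2)
  calc ‖∑' k, (γ k : ℂ) * z ^ k‖
      ≤ ‖(γ 0 : ℂ) + γ 1 * z‖ + ‖∑' k, (γ (k + 2) : ℂ) * z ^ (k + 2)‖ := hsplit ▸ norm_add_le _ _
    _ < (γ 0 + γ 1) + (1 - (γ 0 + γ 1)) :=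
        add_lt_add_of_lt_of_le (norm_ofReal_add_ofReal_mul_lt h₀ h₁ hz hz1) htail
    _ = 1 := by ring

namespace Halley

noncomputable def coeff (β : ℝ) : ℕ → ℝ
  | 0 => 1
  | 1 => 1
  | n + 2 => coeff β (n + 1) - β * (n / (n + 2)) * coeff β n

noncomputable def gap (β : ℝ) (k : ℕ) : ℝ := coeff β (k + 2) - coeff β (k + 3)

section Coefficients

variable {β : ℝ}

@[simp] lemma coeff_zero : coeff β 0 = 1 := rfl

@[simp] lemma coeff_one : coeff β 1 = 1 := rfl

@[simp] lemma coeff_two : coeff β 2 = 1 := by simp [coeff]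

lemma coeff_add_two (n : ℕ) :
    coeff β (n + 2) = coeff β (n + 1) - β * (n / (n + 2)) * coeff β n := rfl

lemma gap_eq (k : ℕ) : gap β k = β * ((k + 1) / (k + 3)) * coeff β (k + 1) := by
  rw [gap, coeff_add_two (k + 1)]
  push_cast
  ring

/-- The last conjunct keeps the induction going: the subtracted term is at most a quarter of
`coeff β n`, hence at most half of `coeff β (n + 1)`. -/
lemma coeff_succ_pos_and_le (hβ : 0 < β) (hβ' : β ≤ 1 / 4) (n : ℕ) :
    0 < coeff β (n + 1) ∧ coeff β (n + 1) ≤ coeff β n ∧ coeff β n ≤ 2 * coeff β (n + 1) := by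
  induction n with
  | zero => norm_num
  | succ n ih =>
    obtain ⟨hpos, hmono, hle⟩ := ih
    have hn : 0 < coeff β n := hpos.trans_le hmono
    have hθ : (n : ℝ) / (n + 2) ≤ 1 := (div_le_one (by positivity)).2 (by linarith)
    have hsub_nonneg : 0 ≤ β * (n / (n + 2)) * coeff β n := by positivity
    have hsub_le : β * (n / (n + 2)) * coeff β n ≤ coeff β n / 4 := by
      have : β * (n / (n + 2)) ≤ 1 / 4 := by nlinarith
      nlinarith [mul_le_mul_of_nonneg_right this hn.le]
    rw [coeff_add_two]
    refine ⟨by linarith, by linarith, by linarith⟩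

lemma coeff_pos (hβ : 0 < β) (hβ' : β ≤ 1 / 4) : ∀ n, 0 < coeff β n
  | 0 => one_pos
  | n + 1 => (coeff_succ_pos_and_le hβ hβ' n).1

lemma coeff_le_one (hβ : 0 < β) (hβ' : β ≤ 1 / 4) (n : ℕ) : coeff β n ≤ 1 := by
  induction n with
  | zero => rfl
  | succ n ih => exact (coeff_succ_pos_and_le hβ hβ' n).2.1.trans ih

lemma gap_pos (hβ : 0 < β) (hβ' : β ≤ 1 / 4) (k : ℕ) : 0 < gap β k := by
  rw [gap_eq]
  have := coeff_pos hβ hβ' (k + 1)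
  positivity

lemma sum_range_gap (N : ℕ) : ∑ k ∈ range N, gap β k = 1 - coeff β (N + 2) := by
  rw [← coeff_two (β := β)]
  exact sum_range_sub' (fun k => coeff β (k + 2)) N

lemma summable_gap (hβ : 0 < β) (hβ' : β ≤ 1 / 4) : Summable (gap β) :=
  summable_of_sum_range_le (c := 1) (fun k => (gap_pos hβ hβ' k).le) fun N => by
    rw [sum_range_gap]
    linarith [coeff_pos hβ hβ' (N + 2)]

/-- The gaps are summable and `gap β n ≥ (β / 3) * coeff β (n + 1)`. -/
lemma summable_coeff (hβ : 0 < β) (hβ' : β ≤ 1 / 4) : Summable (coeff β) := by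
  refine (summable_nat_add_iff 1).1 <| ((summable_gap hβ hβ').mul_left (3 / β)).of_nonneg_of_le
    (fun n => (coeff_pos hβ hβ' _).le) fun n => ?_
  rw [gap_eq, ← mul_assoc, ← mul_assoc, div_mul_cancel₀ _ hβ.ne']
  have hθ : (1 : ℝ) ≤ 3 * ((n + 1) / (n + 3)) := by
    rw [mul_div_assoc', le_div_iff₀ (by positivity)]
    linarith [(n.cast_nonneg : (0 : ℝ) ≤ n)]
  have := coeff_pos hβ hβ' (n + 1)
  nlinarith

lemma hasSum_gap (hβ : 0 < β) (hβ' : β ≤ 1 / 4) : HasSum (gap β) 1 := by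
  refine (summable_gap hβ hβ').hasSum_iff_tendsto_nat.2 ?_
  simp only [sum_range_gap]
  simpa using tendsto_const_nhds.sub
    (((summable_coeff hβ hβ').tendsto_atTop_zero).comp (tendsto_add_atTop_nat 2))

end Coefficients

noncomputable def series (β : ℝ) (z : ℂ) : ℂ := ∑' n, (coeff β n : ℂ) * z ^ n

section Series

variable {β : ℝ}

lemma norm_coeff_mul_pow_le (hβ : 0 < β) (hβ' : β ≤ 1 / 4) {z : ℂ} (hz : ‖z‖ ≤ 1) (n : ℕ) :
    ‖(coeff β n : ℂ) * z ^ n‖ ≤ coeff β n := by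
  rw [norm_mul, norm_pow, Complex.norm_real, Real.norm_of_nonneg (coeff_pos hβ hβ' n).le]
  exact mul_le_of_le_one_right (coeff_pos hβ hβ' n).le (pow_le_one₀ (norm_nonneg z) hz)

lemma hasSum_series (hβ : 0 < β) (hβ' : β ≤ 1 / 4) {z : ℂ} (hz : ‖z‖ ≤ 1) :
    HasSum (fun n => (coeff β n : ℂ) * z ^ n) (series β z) :=
  (Summable.of_norm_bounded (summable_coeff hβ hβ') (norm_coeff_mul_pow_le hβ hβ' hz)).hasSum

lemma series_zero : series β 0 = 1 := by
  rw [series, tsum_eq_single 0 fun n hn => by simp [hn]]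
  simp

lemma continuousOn_series (hβ : 0 < β) (hβ' : β ≤ 1 / 4) :
    ContinuousOn (series β) (closedBall 0 1) :=
  continuousOn_tsum (fun n => by fun_prop) (summable_coeff hβ hβ') fun n z hz =>
    norm_coeff_mul_pow_le hβ hβ' (mem_closedBall_zero_iff.1 hz) n

lemma norm_coeff_mul_deriv_pow_le (hβ : 0 < β) (hβ' : β ≤ 1 / 4) {y : ℂ} {r : ℝ} (hy : ‖y‖ ≤ r)
    (n : ℕ) : ‖(coeff β n : ℂ) * (n * y ^ (n - 1))‖ ≤ n * r ^ (n - 1) := by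
  rw [norm_mul, norm_mul, norm_pow, Complex.norm_real, Complex.norm_natCast,
    Real.norm_of_nonneg (coeff_pos hβ hβ' n).le]
  calc coeff β n * (n * ‖y‖ ^ (n - 1)) ≤ 1 * (n * r ^ (n - 1)) :=
        mul_le_mul (coeff_le_one hβ hβ' n) (mul_le_mul_of_nonneg_left
          (pow_le_pow_left₀ (norm_nonneg y) hy _) n.cast_nonneg) (by positivity) zero_le_one
    _ = n * r ^ (n - 1) := one_mul _

lemma hasDerivAt_series (hβ : 0 < β) (hβ' : β ≤ 1 / 4) {z : ℂ} (hz : ‖z‖ < 1) :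
    HasDerivAt (series β) (∑' n, (coeff β n : ℂ) * (n * z ^ (n - 1))) z := by
  obtain ⟨r, hzr, hr1⟩ := exists_between hz
  have hr0 : 0 ≤ r := (norm_nonneg z).trans hzr.le
  exact hasDerivAt_tsum_of_isPreconnected (g := fun n y => (coeff β n : ℂ) * y ^ n)
    (summable_nat_mul_pow_pred hr0 hr1) isOpen_ball (convex_ball 0 r).isPreconnected
    (fun n y _ => (hasDerivAt_pow n y).const_mul _)
    (fun n y hy => norm_coeff_mul_deriv_pow_le hβ hβ' (mem_ball_zero_iff.1 hy).le n)
    (mem_ball_self ((norm_nonneg z).trans_lt hzr))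
    (hasSum_series hβ hβ' (by simp)).summable (mem_ball_zero_iff.2 hzr)

lemma coeff_recurrence (n : ℕ) :
    (n + 2) * coeff β (n + 2) - (n + 1) * coeff β (n + 1) + β * n * coeff β n
      = coeff β (n + 1) := by
  rw [coeff_add_two]
  field_simp
  ring

/-- Comparing coefficients of `z ^ (n + 1)` reduces this to `coeff_recurrence`. -/
lemma series_ode (hβ : 0 < β) (hβ' : β ≤ 1 / 4) {z : ℂ} (hz : ‖z‖ < 1) :
    (1 - z + β * z ^ 2) * ∑' n, (coeff β n : ℂ) * (n * z ^ (n - 1)) = series β z := by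
  set t : ℕ → ℂ := fun n => (coeff β n : ℂ) * (n * z ^ (n - 1))
  have hT : HasSum t (∑' n, t n) :=
    (Summable.of_norm_bounded (summable_nat_mul_pow_pred (norm_nonneg z) hz)
      (norm_coeff_mul_deriv_pow_le hβ hβ' le_rfl)).hasSum
  have hS := hasSum_series hβ hβ' hz.le
  have hS₁ : HasSum (fun n => (coeff β (n + 1) : ℂ) * z ^ (n + 1)) (series β z - 1) := by
    simpa using (hasSum_nat_add_iff' 1).2 hS
  have hT₂ : HasSum (fun n => t (n + 2)) (∑' n, t n - 1) := by
    simpa [t, sum_range_succ] using (hasSum_nat_add_iff' 2).2 hT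
  have hT₁ : HasSum (fun n => z * t (n + 1)) (z * ∑' n, t n) := by
    simpa [t] using ((hasSum_nat_add_iff' 1).2 hT).mul_left z
  have hT₀ := hT.mul_left (β * z ^ 2)
  have hterm : ∀ n, t (n + 2) - z * t (n + 1) + β * z ^ 2 * t n
      - (coeff β (n + 1) : ℂ) * z ^ (n + 1) = 0 := by
    intro n
    have hrec := congrArg (fun x : ℝ => (x : ℂ) * z ^ (n + 1)) (coeff_recurrence (β := β) n)
    have hz2 : z ^ 2 * t n = n * coeff β n * z ^ (n + 1) := by
      rcases n with _ | n
      · simp [t]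
      · simp only [t, Nat.add_sub_cancel]
        push_cast
        ring
    simp only [t, Nat.add_sub_cancel] at hrec ⊢
    push_cast at hrec hz2 ⊢
    linear_combination hrec + β * hz2
  have hsum := (((hT₂.sub hT₁).add hT₀).sub hS₁).unique (by simpa only [hterm] using hasSum_zero)
  linear_combination hsum

lemma one_sub_mul_series (hβ : 0 < β) (hβ' : β ≤ 1 / 4) {z : ℂ} (hz : ‖z‖ ≤ 1) :
    1 - (1 - z) * series β z = z ^ 3 * ∑' k, (gap β k : ℂ) * z ^ k := by
  have hS := hasSum_series hβ hβ' hz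
  have hdiff : HasSum (fun n => z * ((coeff β n : ℂ) * z ^ n) - coeff β (n + 1) * z ^ (n + 1))
      (1 - (1 - z) * series β z) := by
    rw [show 1 - (1 - z) * series β z = z * series β z - (series β z - 1) by ring]
    exact (hS.mul_left z).sub (by simpa using (hasSum_nat_add_iff' 1).2 hS)
  have hhead :
      ∑ i ∈ range 2, (z * ((coeff β i : ℂ) * z ^ i) - coeff β (i + 1) * z ^ (i + 1)) = 0 := by
    simp only [sum_range_succ, range_one, sum_singleton, zero_add, Nat.reduceAdd, coeff_zero,
      coeff_one, coeff_two, Complex.ofReal_one]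
    ring
  have hshift := (hasSum_nat_add_iff' 2).2 hdiff
  rw [hhead, sub_zero] at hshift
  rw [← hshift.tsum_eq, ← tsum_mul_left]
  refine tsum_congr fun k => ?_
  simp only [gap]
  push_cast
  ring

end Series

noncomputable def beta (p : ℕ) : ℝ := ((p : ℝ) ^ 2 - 1) / (4 * p ^ 2)

noncomputable def ratio (p : ℕ) (z : ℂ) : ℂ := (2 * p - (p - 1) * z) / (2 * p - (p + 1) * z)

noncomputable def residualMap (p : ℕ) (t : ℂ) : ℂ := 1 - (1 - t) * ratio p t ^ p

section Ratio

variable {p : ℕ}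

lemma beta_pos (hp : 2 ≤ p) : 0 < beta p := by
  have : (2 : ℝ) ≤ p := by exact_mod_cast hp
  unfold beta
  apply div_pos <;> nlinarith

lemma beta_le (p : ℕ) : beta p ≤ 1 / 4 := by
  unfold beta
  rcases p.eq_zero_or_pos with rfl | hp
  · norm_num
  · rw [div_le_iff₀ (by positivity)]
    linarith

lemma ratio_num_den_ne_zero (hp : 2 ≤ p) {z : ℂ} (hz : ‖z‖ ≤ 1) :
    2 * (p : ℂ) - (p - 1) * z ≠ 0 ∧ 2 * (p : ℂ) - (p + 1) * z ≠ 0 := by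
  have : (2 : ℝ) ≤ p := by exact_mod_cast hp
  constructor
  · simpa using ofReal_sub_mul_ne_zero (a := 2 * p) (c := p - 1)
      (by rw [abs_of_nonneg (by linarith)]; linarith) hz
  · simpa using ofReal_sub_mul_ne_zero (a := 2 * p) (c := p + 1)
      (by rw [abs_of_nonneg (by linarith)]; linarith) hz

lemma ratio_ne_zero (hp : 2 ≤ p) {z : ℂ} (hz : ‖z‖ ≤ 1) : ratio p z ≠ 0 :=
  div_ne_zero (ratio_num_den_ne_zero hp hz).1 (ratio_num_den_ne_zero hp hz).2

lemma ratio_num_mul_den (hp : p ≠ 0) (z : ℂ) :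
    (2 * (p : ℂ) - (p - 1) * z) * (2 * p - (p + 1) * z)
      = 4 * p ^ 2 * (1 - z + beta p * z ^ 2) := by
  have : (p : ℂ) ≠ 0 := by exact_mod_cast hp
  simp only [beta]
  push_cast
  field_simp
  ring

lemma hasDerivAt_ratio_pow (hp : 2 ≤ p) {z : ℂ} (hz : ‖z‖ ≤ 1) :
    HasDerivAt (fun y => ratio p y ^ p)
      ((1 - z + beta p * z ^ 2)⁻¹ * ratio p z ^ p) z := by
  obtain ⟨hN, hD⟩ := ratio_num_den_ne_zero hp hz
  have hp0 : (p : ℂ) ≠ 0 := by exact_mod_cast (by omega : p ≠ 0)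
  have hR : HasDerivAt (ratio p) (4 * p / (2 * p - (p + 1) * z) ^ 2) z := by
    have := ((hasDerivAt_id z).const_mul ((p : ℂ) - 1)).const_sub (2 * (p : ℂ)) |>.div
      (((hasDerivAt_id z).const_mul ((p : ℂ) + 1)).const_sub (2 * (p : ℂ))) hD
    refine this.congr_deriv ?_
    simp only [id]
    field_simp
    ring
  refine (hR.pow p).congr_deriv ?_
  have hq : 1 - z + beta p * z ^ 2
      = (2 * (p : ℂ) - (p - 1) * z) * (2 * p - (p + 1) * z) / (4 * p ^ 2) := by
    rw [ratio_num_mul_den (by omega)]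
    field_simp
  have hND : 2 * (p : ℂ) - (p - 1) * z = ratio p z * (2 * p - (p + 1) * z) := by
    rw [ratio, div_mul_cancel₀ _ hD]
  have hR0 := ratio_ne_zero hp hz
  rw [hq, hND, ← pow_sub_one_mul (by omega : p ≠ 0)]
  field_simp

theorem series_eq_ratio_pow (hp : 2 ≤ p) {z : ℂ} (hz : ‖z‖ ≤ 1) :
    series (beta p) z = ratio p z ^ p := by
  have hβ := beta_pos hp
  have hβ' := beta_le p
  have hp0 : (p : ℂ) ≠ 0 := by exact_mod_cast (by omega : p ≠ 0)
  have hopen : Set.EqOn (series (beta p)) (fun y => ratio p y ^ p) (ball 0 1) := by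
    refine eqOn_of_hasDerivAt_mul_self isOpen_ball (convex_ball 0 1).isPreconnected
      (a := fun y => (1 - y + beta p * y ^ 2)⁻¹) (fun y hy => ?_)
      (fun y hy => hasDerivAt_ratio_pow hp (mem_ball_zero_iff.1 hy).le)
      (fun y hy => pow_ne_zero _ (ratio_ne_zero hp (mem_ball_zero_iff.1 hy).le))
      (mem_ball_self one_pos) (by simp [series_zero, ratio, hp0])
    have hy' := mem_ball_zero_iff.1 hy
    have hq : 1 - y + beta p * y ^ 2 ≠ 0 := by
      have h := ratio_num_mul_den (p := p) (by omega) y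
      obtain ⟨hN, hD⟩ := ratio_num_den_ne_zero hp hy'.le
      intro hq
      rw [hq, mul_zero] at h
      exact mul_ne_zero hN hD h
    refine (hasDerivAt_series hβ hβ' hy').congr_deriv ?_
    rw [← series_ode hβ hβ' hy', inv_mul_cancel_left₀ hq]
  have hcont : ContinuousOn (fun y => ratio p y ^ p) (closedBall 0 1) :=
    (ContinuousOn.div (by fun_prop) (by fun_prop) fun y hy =>
      (ratio_num_den_ne_zero hp (mem_closedBall_zero_iff.1 hy)).2).pow p
  exact hopen.of_subset_closure (continuousOn_series hβ hβ') hcont ball_subset_closedBall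
    (closure_ball 0 one_ne_zero).ge (mem_closedBall_zero_iff.2 hz)

end Ratio

theorem norm_residualMap_lt {p : ℕ} (hp : 2 ≤ p) {w : ℂ} (hw : ‖w‖ ≤ 1) (hw0 : w ≠ 0)
    (hw1 : w ≠ 1) : ‖residualMap p w‖ < ‖w‖ ^ 3 := by
  have hβ := beta_pos hp
  have hβ' := beta_le p
  rw [residualMap, ← series_eq_ratio_pow hp hw, one_sub_mul_series hβ hβ' hw, norm_mul,
    norm_pow]
  exact mul_lt_of_lt_one_right (pow_pos (norm_pos_iff.2 hw0) 3)
    (norm_tsum_mul_pow_lt_one (fun k => (gap_pos hβ hβ' k).le) (hasSum_gap hβ hβ')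
      (gap_pos hβ hβ' 0) (gap_pos hβ hβ' 1) hw hw1)

lemma norm_residualMap_lt_of_norm_le {p : ℕ} (hp : 2 ≤ p) {w : ℂ} {r : ℝ} (hr : 0 < r)
    (hr1 : r ≤ 1) (hw : ‖w‖ ≤ r) (hw1 : w ≠ 1) : ‖residualMap p w‖ < r ^ 3 := by
  rcases eq_or_ne w 0 with rfl | hw0
  · have hp0 : (p : ℂ) ≠ 0 := by exact_mod_cast (by omega : p ≠ 0)
    simpa [residualMap, ratio, hp0] using pow_pos hr 3
  · exact (norm_residualMap_lt hp (hw.trans hr1) hw0 hw1).trans_le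
      (pow_le_pow_left₀ (norm_nonneg w) hw 3)

noncomputable def update (p : ℕ) (z v : ℂ) : ℂ :=
  v * ((p - 1) * v ^ p + (p + 1) * (1 - z)) / ((p + 1) * v ^ p + (p - 1) * (1 - z))

noncomputable def residual (p : ℕ) (z v : ℂ) : ℂ := 1 - (1 - z) / v ^ p

lemma residual_ne_one {p : ℕ} {z v : ℂ} (hz : z ≠ 1) (hv : v ≠ 0) :
    residual p z v ≠ 1 := by
  rw [residual, Ne, sub_eq_self, div_eq_zero_iff, not_or]
  exact ⟨sub_ne_zero.2 hz.symm, pow_ne_zero p hv⟩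

lemma residual_update {p : ℕ} (hp : 2 ≤ p) {z v : ℂ} (hv : v ≠ 0)
    (hw : ‖residual p z v‖ ≤ 1) :
    (p + 1) * v ^ p + (p - 1) * (1 - z) ≠ 0 ∧ update p z v ≠ 0 ∧
      residual p z (update p z v) = residualMap p (residual p z v) := by
  set w := residual p z v with hwdef
  have hvp : v ^ p ≠ 0 := pow_ne_zero p hv
  have h1z : 1 - z = (1 - w) * v ^ p := by
    rw [hwdef, residual]
    field_simp
    ring
  have hnum : (p - 1) * v ^ p + (p + 1) * (1 - z) = v ^ p * (2 * p - (p + 1) * w) := by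
    rw [h1z]; ring
  have hden : (p + 1) * v ^ p + (p - 1) * (1 - z) = v ^ p * (2 * p - (p - 1) * w) := by
    rw [h1z]; ring
  obtain ⟨hN, hD⟩ := ratio_num_den_ne_zero hp hw
  refine ⟨by rw [hden]; exact mul_ne_zero hvp hN, ?_, ?_⟩
  · rw [update, hnum, hden]
    exact div_ne_zero (mul_ne_zero hv (mul_ne_zero hvp hD)) (mul_ne_zero hvp hN)
  · rw [residual, update, hnum, hden, h1z, residualMap, ratio]
    simp only [div_pow, mul_pow]
    field_simp

lemma update_spec {p : ℕ} (hp : 2 ≤ p) {z v : ℂ} (hz : ‖z‖ ≤ 1) (hz0 : z ≠ 0) (hz1 : z ≠ 1)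
    (hv : v ≠ 0) {m : ℕ} (hw : ‖residual p z v‖ ≤ ‖z‖ ^ 3 ^ m) :
    (p + 1) * v ^ p + (p - 1) * (1 - z) ≠ 0 ∧ update p z v ≠ 0 ∧
      ‖residual p z (update p z v)‖ < ‖z‖ ^ 3 ^ (m + 1) := by
  have hpow_le : ‖z‖ ^ 3 ^ m ≤ 1 := pow_le_one₀ (norm_nonneg z) hz
  obtain ⟨hden, hne, heq⟩ := residual_update hp hv (hw.trans hpow_le)
  refine ⟨hden, hne, ?_⟩
  rw [heq, pow_succ, pow_mul]
  exact norm_residualMap_lt_of_norm_le hp (pow_pos (norm_pos_iff.2 hz0) _) hpow_le hw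
    (residual_ne_one hz1 hv)

end Halley

theorem stmt_14 (p : ℕ) (hp : 2 ≤ p) (V : ℕ → ℂ → ℂ) (H : ℕ → ℂ → ℂ)
    (hV0 : ∀ z, V 0 z = 1)
    (hV : ∀ k z, V (k + 1) z =
      V k z * ((p - 1) * (V k z) ^ p + (p + 1) * (1 - z)) /
        ((p + 1) * (V k z) ^ p + (p - 1) * (1 - z)))
    (hH : ∀ k z, H k z = 1 - (1 - z) / (V k z) ^ p) :
    ∀ k, 1 ≤ k → ∀ z : ℂ, ‖z‖ ≤ 1 → z ≠ 0 → z ≠ 1 →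
      ‖H k z‖ < ‖z‖ ^ (3 ^ k) ∧ (∀ j ≤ k, V j z ≠ 0) ∧
        ∀ j < k, (p + 1) * (V j z) ^ p + (p - 1) * (1 - z) ≠ 0 := by
  intro k hk z hz hz0 hz1
  have hinv : ∀ m, V m z ≠ 0 ∧ ‖Halley.residual p z (V m z)‖ ≤ ‖z‖ ^ 3 ^ m := by
    intro m
    induction m with
    | zero => simp [Halley.residual, hV0]
    | succ m ih =>
      obtain ⟨-, hne, hlt⟩ := Halley.update_spec hp hz hz0 hz1 ih.1 ih.2
      rw [hV]
      exact ⟨hne, hlt.le⟩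
  have hstep := fun m => Halley.update_spec hp hz hz0 hz1 (hinv m).1 (hinv m).2
  obtain ⟨m, rfl⟩ : ∃ m, k = m + 1 := ⟨k - 1, by omega⟩
  refine ⟨?_, fun j _ => (hinv j).1, fun j _ => (hstep j).1⟩
  rw [hH, hV]
  exact (hstep m).2.2
end

section
/- Let p ≥ 2 be an integer, U_k the Newton iterates for x^p = 1-z starting at 1, and let (1-z)^{1/p} denote the principal pth root. Then U_k(z) - (1-z)^{1/p} = [U_k(z)^p / Σ_{r=1}^{p} U_k(z)^{r-1} ((1-z)^{1/p})^{p-r}] · N_k(z) near z = 0, and hence U_k(z) - (1-z)^{1/p} = O(z^{2^k}) as z → 0. -/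
/-!
With `N_k = 1 - (1 - z) / U_k ^ p`, one Newton step reads `U_{k+1} = U_k (1 - N_k / p)`, so
`1 - N_{k+1} = (1 - N_k) / (1 - N_k / p) ^ p`. As `a ^ p - 1 - p (a - 1)` is divisible by
`(a - 1) ^ 2`, this makes `N_{k+1} = O(N_k ^ 2)`, and `N_0 = z`. The identity for
`U_k - (1 - z) ^ (1 / p)` is the factorization of `U_k ^ p - (1 - z)`, whose prefactor tends
to `1 / p`, so it inherits the bound on `N_k`.
-/

open Asymptotics Filter Finset Topology

theorem pow_sub_one_sub_mul_sub_one {R : Type*} [CommRing R] (a : R) (n : ℕ) :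
    a ^ n - 1 - n * (a - 1) = (a - 1) ^ 2 * ∑ r ∈ range n, ∑ i ∈ range r, a ^ i := by
  induction n with
  | zero => simp
  | succ n ih =>
    rw [sum_range_succ, mul_add, ← ih]
    push_cast
    linear_combination (1 - a) * geom_sum_mul a n

section NewtonAlgebra

variable {K : Type*} [Field K] {p : ℕ} {u c : K}

theorem newton_step_eq_mul (hp : (p : K) ≠ 0) (hu : u ≠ 0) :
    ((p - 1) * u + c / u ^ (p - 1)) / p = u * (1 - (1 - c / u ^ p) / p) := by
  obtain ⟨q, rfl⟩ : ∃ q, p = q + 1 :=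
    Nat.exists_eq_succ_of_ne_zero (by rintro rfl; simp at hp)
  rw [Nat.add_sub_cancel]
  field_simp
  ring

theorem one_sub_div_mul_one_sub_div_pow_eq {n : K} (hp : (p : K) ≠ 0) (hu : u ≠ 0)
    (ha : 1 - n / p ≠ 0) (hc : c = u ^ p * (1 - n)) :
    1 - c / (u * (1 - n / p)) ^ p =
      (n / p) ^ 2 *
        ((∑ r ∈ range p, ∑ i ∈ range r, (1 - n / p) ^ i) / (1 - n / p) ^ p) := by
  have key := pow_sub_one_sub_mul_sub_one (1 - n / p) p
  rw [show 1 - n / p - 1 = -(n / p) by ring, neg_sq] at key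
  have ha' : (1 - n / p) ^ p ≠ 0 := pow_ne_zero p ha
  rw [hc, mul_pow, mul_div_mul_left _ _ (pow_ne_zero p hu), ← mul_div_assoc, ← key, mul_neg,
    mul_div_cancel₀ _ hp, eq_div_iff ha', sub_mul, div_mul_cancel₀ _ ha']
  ring

theorem sub_eq_pow_div_geom_sum₂_mul {w : K} (hu : u ≠ 0)
    (hS : ∑ r ∈ range p, u ^ r * w ^ (p - 1 - r) ≠ 0) :
    u - w = u ^ p / (∑ r ∈ range p, u ^ r * w ^ (p - 1 - r)) * (1 - w ^ p / u ^ p) := by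
  rw [div_mul_eq_mul_div, eq_div_iff hS, mul_sub, mul_one, mul_div_cancel₀ _ (pow_ne_zero p hu),
    ← geom_sum₂_mul, mul_comm]

end NewtonAlgebra

theorem tendsto_one_sub_nhds_zero : Tendsto (fun z : ℂ => 1 - z) (𝓝 0) (𝓝 1) := by
  simpa using (tendsto_id (x := 𝓝 (0 : ℂ))).const_sub 1

theorem tendsto_one_sub_cpow_nhds_zero (c : ℂ) :
    Tendsto (fun z : ℂ => (1 - z) ^ c) (𝓝 0) (𝓝 1) := by
  have h : ContinuousAt (fun z : ℂ => (1 - z) ^ c) 0 :=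
    ContinuousAt.cpow (by fun_prop) continuousAt_const (by simp [Complex.slitPlane])
  simpa using h.tendsto

noncomputable def newtonIter (p : ℕ) : ℕ → ℂ → ℂ
  | 0, _ => 1
  | k + 1, z => ((p - 1) * newtonIter p k z + (1 - z) / newtonIter p k z ^ (p - 1)) / p

noncomputable def newtonResidual (p k : ℕ) (z : ℂ) : ℂ :=
  1 - (1 - z) / newtonIter p k z ^ p

section NewtonAnalysis

variable {p : ℕ}

theorem tendsto_newtonIter (hp : p ≠ 0) (k : ℕ) :
    Tendsto (newtonIter p k) (𝓝 0) (𝓝 1) := by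
  have hp' : (p : ℂ) ≠ 0 := Nat.cast_ne_zero.2 hp
  induction k with
  | zero => exact tendsto_const_nhds
  | succ k ih =>
    have h := ((ih.const_mul ((p : ℂ) - 1)).add
      (tendsto_one_sub_nhds_zero.div (ih.pow (p - 1)) (by simp))).div_const (p : ℂ)
    have hlim : (((p : ℂ) - 1) * 1 + 1 / 1 ^ (p - 1)) / p = 1 := by field_simp; ring
    rw [← hlim]
    exact h

theorem tendsto_newtonResidual (hp : p ≠ 0) (k : ℕ) :
    Tendsto (newtonResidual p k) (𝓝 0) (𝓝 0) := by
  have h := (tendsto_one_sub_nhds_zero.div ((tendsto_newtonIter hp k).pow p) (by simp)).const_sub 1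
  rwa [one_pow, div_one, sub_self] at h

theorem tendsto_one_sub_newtonResidual_div (hp : p ≠ 0) (k : ℕ) :
    Tendsto (fun z => 1 - newtonResidual p k z / p) (𝓝 0) (𝓝 1) := by
  simpa using ((tendsto_newtonResidual hp k).div_const (p : ℂ)).const_sub 1

theorem newtonResidual_succ_eventuallyEq (hp : p ≠ 0) (k : ℕ) :
    newtonResidual p (k + 1) =ᶠ[𝓝 0] fun z =>
      (newtonResidual p k z / p) ^ 2 *
        ((∑ r ∈ range p, ∑ i ∈ range r, (1 - newtonResidual p k z / p) ^ i) /
          (1 - newtonResidual p k z / p) ^ p) := by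
  have hp' : (p : ℂ) ≠ 0 := Nat.cast_ne_zero.2 hp
  filter_upwards [(tendsto_newtonIter hp k).eventually_ne one_ne_zero,
    (tendsto_one_sub_newtonResidual_div hp k).eventually_ne one_ne_zero] with z hu ha
  have hstep : newtonIter p (k + 1) z = newtonIter p k z * (1 - newtonResidual p k z / p) := by
    rw [newtonIter, newtonResidual]
    exact newton_step_eq_mul hp' hu
  rw [newtonResidual, hstep]
  exact one_sub_div_mul_one_sub_div_pow_eq hp' hu ha (by rw [newtonResidual]; field_simp; ring)

theorem newtonResidual_isBigO (hp : p ≠ 0) (k : ℕ) :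
    newtonResidual p k =O[𝓝 0] fun z => z ^ 2 ^ k := by
  induction k with
  | zero =>
    have h : newtonResidual p 0 = fun z => z := funext fun z => by
      simp [newtonResidual, newtonIter]
    simpa [h] using isBigO_refl (fun z : ℂ => z) (𝓝 0)
  | succ k ih =>
    have hG : Continuous fun a : ℂ => ∑ r ∈ range p, ∑ i ∈ range r, a ^ i := by fun_prop
    have ha := tendsto_one_sub_newtonResidual_div hp k
    have hbdd : (fun z => (1 / (p : ℂ)) ^ 2 *
        ((∑ r ∈ range p, ∑ i ∈ range r, (1 - newtonResidual p k z / p) ^ i) /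
          (1 - newtonResidual p k z / p) ^ p)) =O[𝓝 0] fun _ => (1 : ℂ) :=
      (tendsto_const_nhds.mul (((hG.tendsto 1).comp ha).div (ha.pow p) (by simp))).isBigO_one ℂ
    refine ((ih.pow 2).mul hbdd).congr' ?_ (Eventually.of_forall fun z => ?_)
    · filter_upwards [newtonResidual_succ_eventuallyEq hp k] with z hz
      rw [hz]
      ring
    · simp only [pow_succ, pow_mul, mul_one]

theorem tendsto_geom_sum₂_newtonIter_root (hp : p ≠ 0) (k : ℕ) :
    Tendsto
      (fun z => ∑ r ∈ range p, newtonIter p k z ^ r * ((1 - z) ^ (p : ℂ)⁻¹) ^ (p - 1 - r))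
      (𝓝 0) (𝓝 p) := by
  have h := tendsto_finsetSum (range p) fun r _ =>
    ((tendsto_newtonIter hp k).pow r).mul
      ((tendsto_one_sub_cpow_nhds_zero (p : ℂ)⁻¹).pow (p - 1 - r))
  simpa using h

theorem eventually_newtonIter_sub_root_eq (hp : p ≠ 0) (k : ℕ) :
    ∀ᶠ z in 𝓝 0, newtonIter p k z - (1 - z) ^ (p : ℂ)⁻¹ =
      newtonIter p k z ^ p /
        (∑ r ∈ range p, newtonIter p k z ^ r * ((1 - z) ^ (p : ℂ)⁻¹) ^ (p - 1 - r)) *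
        newtonResidual p k z := by
  filter_upwards [(tendsto_newtonIter hp k).eventually_ne one_ne_zero,
    (tendsto_geom_sum₂_newtonIter_root hp k).eventually_ne (Nat.cast_ne_zero.2 hp)] with z hu hS
  rw [sub_eq_pow_div_geom_sum₂_mul hu hS, Complex.cpow_nat_inv_pow _ hp, newtonResidual]

theorem newtonIter_sub_root_isBigO (hp : p ≠ 0) (k : ℕ) :
    (fun z => newtonIter p k z - (1 - z) ^ (p : ℂ)⁻¹) =O[𝓝 0] fun z => z ^ 2 ^ k := by
  have hbdd := ((tendsto_newtonIter hp k).pow p).div (tendsto_geom_sum₂_newtonIter_root hp k)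
    (Nat.cast_ne_zero.2 hp) |>.isBigO_one ℂ
  exact (hbdd.mul (newtonResidual_isBigO hp k)).congr'
    ((eventually_newtonIter_sub_root_eq hp k).mono fun _ h => h.symm)
    (Eventually.of_forall fun z => one_mul _)

end NewtonAnalysis

open Asymptotics in
theorem stmt_15 (p : ℕ) (hp : 2 ≤ p) (U : ℕ → ℂ → ℂ) (N : ℕ → ℂ → ℂ)
    (hU0 : ∀ z, U 0 z = 1)
    (hU : ∀ k z, U (k + 1) z =
      ((p - 1) * U k z + (1 - z) / (U k z) ^ (p - 1)) / p)
    (hN : ∀ k z, N k z = 1 - (1 - z) / (U k z) ^ p) (k : ℕ) :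
    (∀ᶠ z : ℂ in nhds 0,
      U k z - (1 - z) ^ ((p : ℂ)⁻¹) =
        (U k z) ^ p /
          (∑ r ∈ Finset.range p, (U k z) ^ r * ((1 - z) ^ ((p : ℂ)⁻¹)) ^ (p - 1 - r)) *
          N k z) ∧
    (fun z : ℂ => U k z - (1 - z) ^ ((p : ℂ)⁻¹)) =O[nhds 0]
      fun z : ℂ => z ^ (2 ^ k) := by
  have hU_eq : U = newtonIter p := by
    funext k z
    induction k with
    | zero => exact hU0 z
    | succ k ih => rw [hU, ih, newtonIter]
  have hN_eq : N = newtonResidual p := by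
    funext k z
    rw [hN, hU_eq, newtonResidual]
  subst hU_eq hN_eq
  have hp0 : p ≠ 0 := by omega
  exact ⟨eventually_newtonIter_sub_root_eq hp0 k, newtonIter_sub_root_isBigO hp0 k⟩
end

section
/- Let p ≥ 2 be an integer and V_k the Halley iterates for x^p = 1-z starting at 1. Then near z = 0, V_k(z) - (1-z)^{1/p} = O(z^{3^k}), where (1-z)^{1/p} is the principal pth root. -/
/-!
Put `w = (1 - z) ^ (1 / p)`, so that `w ^ p = 1 - z` and the Halley step reads
`x ↦ x ((p - 1) x ^ p + (p + 1) w ^ p) / ((p + 1) x ^ p + (p - 1) w ^ p)`.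
Expanding the numerator of `x' - w` in `t = x - w`, the coefficients of `1`, `t` and `t ^ 2`
vanish, so it is `t ^ 3` times a polynomial in `w` and `t`, while the denominator tends to
`2 p ≠ 0` as `x, w → 1`. Hence `x - w = O(g)` gives `x' - w = O(g ^ 3)`, and induction from
`V 0 - w = w 0 - w = O(z)` gives the exponent `3 ^ k`.
-/

open Asymptotics Filter Finset Topology

section Algebra

variable {R : Type*} [CommRing R]

def halleyCoeff (p j : ℕ) : R :=
  ((p : R) - 1) * (p + 1).choose j - ((p : R) + 1) * p.choose j

lemma halleyCoeff_zero (p : ℕ) : halleyCoeff p 0 = (-2 : R) := by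
  simp only [halleyCoeff, Nat.choose_zero_right, Nat.cast_one]
  ring

lemma halleyCoeff_one (p : ℕ) : halleyCoeff p 1 = -((p : R) + 1) := by
  simp only [halleyCoeff, Nat.choose_one_right]
  push_cast
  ring

lemma halleyCoeff_two (p : ℕ) : halleyCoeff p 2 = (0 : R) := by
  have hsucc : ((p + 1).choose 2 : R) = p + p.choose 2 := by
    rw [Nat.choose_succ_succ', Nat.choose_one_right, Nat.cast_add]
  have hmul : ((p : R) + 1) * p = (p + 1).choose 2 * 2 := by
    have h := Nat.add_one_mul_choose_eq p 1
    rw [Nat.choose_one_right] at h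
    exact_mod_cast congrArg (Nat.cast : ℕ → R) h
  simp only [halleyCoeff]
  linear_combination hmul + (p + 1 : R) * hsucc

def halleyCofactor (p : ℕ) (w t : R) : R :=
  ∑ j ∈ range (p - 1), halleyCoeff p (j + 3) * w ^ (p - 2 - j) * t ^ j

lemma add_pow_eq_sum (m : ℕ) (w t : R) :
    (w + t) ^ m = ∑ j ∈ range (m + 1), (m.choose j : R) * w ^ (m - j) * t ^ j := by
  rw [add_comm, add_pow]
  exact sum_congr rfl fun j _ => by ring

lemma mul_add_pow_eq_sum (m : ℕ) (w t : R) :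
    w * (w + t) ^ m = ∑ j ∈ range (m + 2), (m.choose j : R) * w ^ (m + 1 - j) * t ^ j := by
  rw [sum_range_succ, Nat.choose_succ_self, Nat.cast_zero, zero_mul, zero_mul, add_zero,
    add_pow_eq_sum, mul_sum]
  refine sum_congr rfl fun j hj => ?_
  rw [Nat.sub_add_comm (Nat.le_of_lt_succ (mem_range.mp hj)), pow_succ]
  ring

theorem halley_numerator_eq {p : ℕ} (hp : 1 ≤ p) (x w : R) :
    x * (((p : R) - 1) * x ^ p + ((p : R) + 1) * w ^ p) -
        w * (((p : R) + 1) * x ^ p + ((p : R) - 1) * w ^ p) =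
      (x - w) ^ 3 * halleyCofactor p w (x - w) := by
  obtain ⟨n, rfl⟩ : ∃ n, p = n + 1 := ⟨p - 1, by omega⟩
  obtain ⟨t, rfl⟩ : ∃ t, x = w + t := ⟨x - w, by ring⟩
  have hexpand : ((n + 1 : ℕ) - 1 : R) * (w + t) ^ (n + 1 + 1) -
      ((n + 1 : ℕ) + 1 : R) * (w * (w + t) ^ (n + 1)) =
      ∑ j ∈ range (n + 3), halleyCoeff (n + 1) j * w ^ (n + 2 - j) * t ^ j := by
    rw [add_pow_eq_sum, mul_add_pow_eq_sum, mul_sum, mul_sum, ← sum_sub_distrib]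
    exact sum_congr rfl fun j _ => by simp only [halleyCoeff]; ring
  rw [sum_range_succ', sum_range_succ', sum_range_succ', halleyCoeff_zero, halleyCoeff_one,
    halleyCoeff_two] at hexpand
  simp only [zero_add, Nat.sub_zero, Nat.reduceSubDiff, add_assoc, Nat.reduceAdd, pow_zero,
    pow_one, mul_one] at hexpand
  have hcofactor : t ^ 3 * halleyCofactor (n + 1) w t =
      ∑ j ∈ range n, halleyCoeff (n + 1) (j + 3) * w ^ (n - (j + 1)) * t ^ (j + 3) := by
    rw [halleyCofactor, mul_sum]
    refine sum_congr rfl fun j hj => ?_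
    rw [show n + 1 - 2 - j = n - (j + 1) by omega]
    ring
  rw [add_sub_cancel_left, hcofactor]
  linear_combination hexpand

end Algebra

lemma Filter.Tendsto.halleyCofactor {α R : Type*} [CommRing R] [TopologicalSpace R]
    [IsTopologicalRing R] {l : Filter α} {w t : α → R} {w₀ t₀ : R} (p : ℕ)
    (hw : Tendsto w l (𝓝 w₀)) (ht : Tendsto t l (𝓝 t₀)) :
    Tendsto (fun b => halleyCofactor p (w b) (t b)) l (𝓝 (halleyCofactor p w₀ t₀)) :=
  tendsto_finsetSum _ fun j _ => (tendsto_const_nhds.mul (hw.pow _)).mul (ht.pow j)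

theorem halley_sub_isBigO {α 𝕜 : Type*} [NormedField 𝕜] [CharZero 𝕜] {l : Filter α} {p : ℕ}
    (hp : 1 ≤ p) {a : 𝕜} (ha : a ≠ 0) {x w g : α → 𝕜} (hx : Tendsto x l (𝓝 a))
    (hw : Tendsto w l (𝓝 a)) (hxw : (fun b => x b - w b) =O[l] g) :
    (fun b => x b * (((p : 𝕜) - 1) * x b ^ p + ((p : 𝕜) + 1) * w b ^ p) /
        (((p : 𝕜) + 1) * x b ^ p + ((p : 𝕜) - 1) * w b ^ p) - w b) =O[l]
      fun b => g b ^ 3 := by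
  have hden : Tendsto (fun b => ((p : 𝕜) + 1) * x b ^ p + ((p : 𝕜) - 1) * w b ^ p) l
      (𝓝 (2 * p * a ^ p)) := by
    convert ((hx.pow p).const_mul ((p : 𝕜) + 1)).add ((hw.pow p).const_mul ((p : 𝕜) - 1))
      using 2
    ring
  have hden_ne : 2 * (p : 𝕜) * a ^ p ≠ 0 := by
    have : (p : 𝕜) ≠ 0 := Nat.cast_ne_zero.mpr (by omega)
    exact mul_ne_zero (mul_ne_zero two_ne_zero this) (pow_ne_zero p ha)
  have hcof := hw.halleyCofactor p (hx.sub hw)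
  have hbound := ((hxw.pow 3).mul (hcof.isBigO_one 𝕜)).mul ((hden.inv₀ hden_ne).isBigO_one 𝕜)
  refine hbound.congr' ?_ (by simp)
  filter_upwards [hden.eventually_ne hden_ne] with b hb
  rw [div_sub' hb, ← halley_numerator_eq hp]
  ring

open Asymptotics in
theorem stmt_16 (p : ℕ) (hp : 2 ≤ p) (V : ℕ → ℂ → ℂ)
    (hV0 : ∀ z, V 0 z = 1)
    (hV : ∀ k z, V (k + 1) z =
      V k z * ((p - 1) * (V k z) ^ p + (p + 1) * (1 - z)) /
        ((p + 1) * (V k z) ^ p + (p - 1) * (1 - z))) (k : ℕ) :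
    (fun z : ℂ => V k z - (1 - z) ^ ((p : ℂ)⁻¹)) =O[nhds 0]
      fun z : ℂ => z ^ (3 ^ k) := by
  set w : ℂ → ℂ := fun z => (1 - z) ^ ((p : ℂ)⁻¹)
  have hw_pow (z : ℂ) : w z ^ p = 1 - z := Complex.cpow_nat_inv_pow _ (by omega)
  have hw_diff : DifferentiableAt ℂ w 0 :=
    ((hasDerivAt_id (0 : ℂ)).const_sub 1).cpow_const (by simp) |>.differentiableAt
  have hw_zero : w 0 = 1 := by simp [w]
  have hw_tendsto : Tendsto w (𝓝 0) (𝓝 1) := hw_zero ▸ hw_diff.continuousAt.tendsto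
  change (fun z => V k z - w z) =O[𝓝 0] _
  induction k with
  | zero =>
    simpa [hV0, hw_zero] using hw_diff.isBigO_sub.neg_left
  | succ k ih =>
    have hVk : Tendsto (V k) (𝓝 0) (𝓝 1) := by
      have hpow : Tendsto (fun z : ℂ => z ^ 3 ^ k) (𝓝 0) (𝓝 0) := by
        simpa using (continuous_pow (3 ^ k)).tendsto (0 : ℂ)
      simpa using (ih.trans_tendsto hpow).add hw_tendsto
    have hstep := halley_sub_isBigO (p := p) (by omega) one_ne_zero hVk hw_tendsto ih
    simp only [hw_pow] at hstep
    refine hstep.congr (fun z => by rw [hV]) fun z => ?_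
    rw [← pow_mul, pow_succ]
end

section
/- Let p ≥ 2 be an integer, and U_k the Newton iterates for x^p = 1-z starting at 1. Then U_k(0) = 1 for every k ≥ 0, and the Taylor expansion of U_k at 0 agrees with that of (1-z)^{1/p} up to order 2^k - 1: U_k(z) = 1 - Σ_{n=1}^{2^k - 1} (Π_{r=1}^{n-1}(rp - 1)) z^n/(n! p^n) + O(z^{2^k}). -/
/-!
The principal root `w z = (1 - z) ^ (1 / p)` satisfies `w ^ p = 1 - z` and `w 0 = 1`, and it is
analytic at `0` with the binomial series `∑ Ring.choose (1 / p) n (-z) ^ n`, whose coefficients are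
the ones in the statement. Newton's method for `x ^ p = c` converges quadratically near a nonzero
root: `N(u) - w = (u - w) ^ 2 * R(u, w)` with `R` a rational function regular at `u = w ≠ 0`.
Hence `U_k - w = O(z ^ (2 ^ k))` by induction, and adding the Taylor remainder of `w` gives the
claimed expansion; evaluating at `z = 0` gives `U_k 0 = w 0 = 1`.
-/

open Asymptotics Filter Finset Topology

theorem add_pow_sub_sub_eq_sq_mul {R : Type*} [CommRing R] (u d : R) (p : ℕ) :
    (u + d) ^ p - u ^ p - p * u ^ (p - 1) * d =
      d ^ 2 * ∑ i ∈ range (p - 1), (p.choose (i + 2) : R) * u ^ (p - 2 - i) * d ^ i := by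
  rcases p with _ | _ | m
  · simp
  · simp
  · rw [add_comm u, add_pow, sum_range_succ', sum_range_succ', mul_sum]
    simp only [Nat.add_sub_add_right, Nat.add_sub_cancel, zero_add, Nat.choose_zero_right,
      Nat.choose_one_right, Nat.sub_zero, pow_zero, pow_one, Nat.cast_one]
    have hsum :
        ∑ i ∈ range (m + 1), d ^ (i + 1 + 1) * u ^ (m - i) * ((m + 2).choose (i + 1 + 1) : R) =
          ∑ i ∈ range (m + 1), d ^ 2 * (((m + 2).choose (i + 2) : R) * u ^ (m - i) * d ^ i) :=
      sum_congr rfl fun i _ => by ring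
    rw [hsum]
    push_cast
    ring

section NewtonRootStep

variable {𝕜 : Type*}

def newtonRootStep [Field 𝕜] (p : ℕ) (c u : 𝕜) : 𝕜 :=
  ((p - 1) * u + c / u ^ (p - 1)) / p

theorem newtonRootStep_pow_sub_eq [Field 𝕜] {p : ℕ} (hp : (p : 𝕜) ≠ 0) {u : 𝕜} (hu : u ≠ 0)
    (w : 𝕜) :
    newtonRootStep p (w ^ p) u - w =
      (u - w) ^ 2 * ((∑ i ∈ range (p - 1), (p.choose (i + 2) : 𝕜) * u ^ (p - 2 - i) * (w - u) ^ i)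
        / (p * u ^ (p - 1))) := by
  have hp1 : 1 ≤ p := Nat.one_le_iff_ne_zero.2 (by rintro rfl; simp at hp)
  have hpow : u ^ (p - 1) * u = u ^ p := by rw [← pow_succ, Nat.sub_add_cancel hp1]
  have h := add_pow_sub_sub_eq_sq_mul u (w - u) p
  rw [add_sub_cancel] at h
  rw [newtonRootStep, ← mul_div_assoc, sub_sq_comm, ← h]
  field_simp
  linear_combination -hpow

variable [NormedField 𝕜] {α : Type*} {l : Filter α} {p : ℕ}

theorem newtonRootStep_sub_isBigO_sq (hp : (p : 𝕜) ≠ 0) {u w c : α → 𝕜} {a : 𝕜} (ha : a ≠ 0)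
    (hu : Tendsto u l (𝓝 a)) (hw : Tendsto w l (𝓝 a)) (hwc : ∀ᶠ x in l, w x ^ p = c x) :
    (fun x => newtonRootStep p (c x) (u x) - w x) =O[l] fun x => (u x - w x) ^ 2 := by
  set R : α → 𝕜 := fun x => (∑ i ∈ range (p - 1),
    (p.choose (i + 2) : 𝕜) * u x ^ (p - 2 - i) * (w x - u x) ^ i) / (p * u x ^ (p - 1))
  have hR : Tendsto R l (𝓝 _) :=
    (tendsto_finsetSum _ fun i _ => ((hu.pow _).const_mul _).mul ((hw.sub hu).pow _)).div
      ((hu.pow _).const_mul _) (mul_ne_zero hp (pow_ne_zero _ ha))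
  have hstep : (fun x => newtonRootStep p (c x) (u x) - w x) =ᶠ[l]
      fun x => (u x - w x) ^ 2 * R x := by
    filter_upwards [hwc, hu.eventually_ne ha] with x hwcx hux
    rw [← hwcx, newtonRootStep_pow_sub_eq hp hux]
  simpa using hstep.trans_isBigO ((isBigO_refl _ l).mul (hR.isBigO_one 𝕜))

theorem newtonRootStep_iterate_sub_isBigO (hp : (p : 𝕜) ≠ 0) {u : ℕ → α → 𝕜} {w c g : α → 𝕜}
    {a : 𝕜} (ha : a ≠ 0) (hw : Tendsto w l (𝓝 a)) (hwc : ∀ᶠ x in l, w x ^ p = c x)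
    (hg : Tendsto g l (𝓝 0)) (hu : ∀ k x, u (k + 1) x = newtonRootStep p (c x) (u k x))
    (hu0 : (fun x => u 0 x - w x) =O[l] g) (k : ℕ) :
    (fun x => u k x - w x) =O[l] fun x => g x ^ 2 ^ k := by
  induction k with
  | zero => simpa using hu0
  | succ k ih =>
    have hgk : Tendsto (fun x => g x ^ 2 ^ k) l (𝓝 0) := by
      simpa using hg.pow (2 ^ k)
    have huk : Tendsto (u k) l (𝓝 a) := by
      simpa using (ih.trans_tendsto hgk).add hw
    simp_rw [hu, pow_succ, pow_mul]
    exact (newtonRootStep_sub_isBigO_sq hp ha huk hw hwc).trans (ih.pow 2)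

end NewtonRootStep

theorem Ring.choose_eq_prod_range_div {𝕜 : Type*} [Field 𝕜] [CharZero 𝕜] (a : 𝕜) (n : ℕ) :
    Ring.choose a n = (∏ j ∈ range n, (a - j)) / n.factorial := by
  rw [Ring.choose_eq_smul, ← Polynomial.aeval_eq_smeval, Polynomial.aeval_def,
    Polynomial.eval₂_eq_eval_map, descPochhammer_map, descPochhammer_eval_eq_prod_range,
    smul_eq_mul, inv_mul_eq_div]

theorem Ring.choose_natCast_inv_mul_neg_pow {𝕜 : Type*} [Field 𝕜] [CharZero 𝕜] {p : ℕ}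
    (hp : (p : 𝕜) ≠ 0) {n : ℕ} (hn : n ≠ 0) (z : 𝕜) :
    Ring.choose (p⁻¹ : 𝕜) n * (-z) ^ n =
      -((∏ r ∈ range (n - 1), (((r : 𝕜) + 1) * p - 1)) * z ^ n / (n.factorial * (p : 𝕜) ^ n)) := by
  obtain ⟨m, rfl⟩ := Nat.exists_eq_add_one_of_ne_zero hn
  have hprod : ∏ j ∈ range m, ((p : 𝕜)⁻¹ - (j + 1)) =
      ∏ r ∈ range m, -(((r : 𝕜) + 1) * p - 1) / p :=
    prod_congr rfl fun j _ => by field_simp; ring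
  rw [Ring.choose_eq_prod_range_div, prod_range_succ', Nat.add_sub_cancel]
  push_cast
  rw [hprod, prod_div_distrib, prod_neg, prod_const, card_range, neg_pow z]
  set Q := ∏ r ∈ range m, (((r : 𝕜) + 1) * p - 1)
  have hsign : ((-1 : 𝕜) ^ m) ^ 2 = 1 := by rw [← pow_mul, pow_mul', neg_one_sq, one_pow]
  field_simp
  linear_combination -(Q * (p : 𝕜) ^ (m + 1) * z ^ (m + 1) / (m + 1).factorial) * hsign

theorem Complex.one_sub_cpow_sub_sum_isBigO (a : ℂ) (N : ℕ) :
    (fun z : ℂ => (1 - z) ^ a - ∑ n ∈ range N, Ring.choose a n * (-z) ^ n) =O[𝓝 0]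
      fun z => z ^ N := by
  have h := (Complex.one_add_cpow_hasFPowerSeriesAt_zero (a := a)).isBigO_sub_partialSum_pow N
  rw [← isBigO_norm_right]
  simpa [Function.comp_def, FormalMultilinearSeries.partialSum, ← sub_eq_add_neg, binomialSeries,
    FormalMultilinearSeries.coeff_ofScalars, mul_comm] using
    h.comp_tendsto (continuous_neg.tendsto' (0 : ℂ) 0 neg_zero)

theorem Complex.one_sub_cpow_inv_natCast_sub_isBigO {p : ℕ} (hp : p ≠ 0) {N : ℕ} (hN : N ≠ 0) :
    (fun z : ℂ => (1 - z) ^ (p⁻¹ : ℂ) - (1 - ∑ n ∈ Icc 1 (N - 1),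
      (∏ r ∈ range (n - 1), (((r : ℂ) + 1) * p - 1)) * z ^ n / (n.factorial * (p : ℂ) ^ n)))
      =O[𝓝 0] fun z => z ^ N := by
  obtain ⟨M, rfl⟩ := Nat.exists_eq_add_one_of_ne_zero hN
  refine (Complex.one_sub_cpow_sub_sum_isBigO (p⁻¹ : ℂ) _).congr_left fun z => ?_
  rw [sum_range_eq_add_Ico _ (by omega : 0 < M + 1), Finset.Ico_add_one_right_eq_Icc,
    Nat.add_sub_cancel, sum_congr rfl fun n hn =>
      Ring.choose_natCast_inv_mul_neg_pow (by exact_mod_cast hp) (by grind) z]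
  simp [sub_eq_add_neg]

open Asymptotics in
theorem stmt_17 (p : ℕ) (hp : 2 ≤ p) (U : ℕ → ℂ → ℂ)
    (hU0 : ∀ z, U 0 z = 1)
    (hU : ∀ k z, U (k + 1) z =
      ((p - 1) * U k z + (1 - z) / (U k z) ^ (p - 1)) / p) :
    (∀ k, U k 0 = 1) ∧
    ∀ k, (fun z : ℂ =>
        U k z - (1 - ∑ n ∈ Finset.Icc 1 (2 ^ k - 1),
          (∏ r ∈ Finset.range (n - 1), (((r : ℂ) + 1) * p - 1)) * z ^ n /
            (n.factorial * (p : ℂ) ^ n))) =O[nhds 0]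
      fun z : ℂ => z ^ (2 ^ k) := by
  have hp0 : p ≠ 0 := by omega
  set w : ℂ → ℂ := fun z => (1 - z) ^ (p⁻¹ : ℂ)
  have hw : Tendsto w (𝓝 0) (𝓝 1) := by
    have h1 : Tendsto (fun z : ℂ => 1 - z) (𝓝 0) (𝓝 1) := by
      simpa using tendsto_const_nhds.sub (tendsto_id (x := 𝓝 (0 : ℂ)))
    have h := (continuousAt_cpow_const (b := (p⁻¹ : ℂ)) Complex.one_mem_slitPlane).tendsto.comp h1
    rwa [Complex.one_cpow] at h
  have hU0w : (fun z => U 0 z - w z) =O[𝓝 0] fun z => z := by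
    simpa [hU0] using (Complex.one_sub_cpow_inv_natCast_sub_isBigO hp0 one_ne_zero).neg_left
  have hroot (k : ℕ) : (fun z => U k z - w z) =O[𝓝 0] fun z => z ^ 2 ^ k :=
    newtonRootStep_iterate_sub_isBigO (g := fun z => z) (by exact_mod_cast hp0) one_ne_zero hw
      (Eventually.of_forall fun z => Complex.cpow_nat_inv_pow _ hp0) tendsto_id hU hU0w k
  refine ⟨fun k => ?_, fun k => ?_⟩
  · have h : (fun z => U k z - w z) =O[𝓝 0] fun z => ‖z - 0‖ ^ 2 ^ k := by
      simpa using (hroot k).norm_right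
    simpa [w, sub_eq_zero] using h.eq_zero_of_norm_pow (by positivity)
  · exact ((hroot k).add (Complex.one_sub_cpow_inv_natCast_sub_isBigO hp0
      (by positivity))).congr_left fun z => by ring
end

section
/- Let p ≥ 2 be an integer, and V_k the Halley iterates for x^p = 1-z starting at 1. Then V_k(0) = 1 for every k ≥ 0, and V_k(z) = 1 - Σ_{n=1}^{3^k - 1} (Π_{r=1}^{n-1}(rp - 1)) z^n/(n! p^n) + O(z^{3^k}) near z = 0. -/
/-!
The principal root `g z = (1 - z) ^ (1 / p)` is the sum of the binomial series, whose `n`-th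
coefficient `(-1) ^ n * choose (1 / p) n` is the coefficient in the statement, so `g` differs from
its Taylor polynomial of degree `< m` by `O(z ^ m)`. Halley's iteration converges cubically: writing
`w = v / g`, its error is `g ^ (p + 1) N(w) / D` with `N` a polynomial having a triple root at
`w = 1`, so an error `O(e)` becomes `O(e ^ 3)`. Starting from `V 0 - g = O(z)`, induction gives
`V k - g = O(z ^ 3 ^ k)`, which also forces `V k 0 = g 0 = 1`.
-/

open Filter Asymptotics Topology Finset Polynomial
open scoped Nat

theorem neg_one_pow_succ_mul_choose_inv_natCast {K : Type*} [Field K] [CharZero K] {p : ℕ}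
    (hp : p ≠ 0) (n : ℕ) :
    (-1) ^ (n + 1) * Ring.choose (p⁻¹ : K) (n + 1) =
      -(∏ r ∈ range n, (((r : K) + 1) * p - 1)) / ((n + 1)! * p ^ (n + 1)) := by
  have hp' : (p : K) ≠ 0 := Nat.cast_ne_zero.2 hp
  have hfactor : ∀ r : ℕ, (p⁻¹ : K) - (r + 1 : ℕ) = -(((r : K) + 1) * p - 1) / p := fun r => by
    field_simp; push_cast; ring
  have hsign : (-1 : K) ^ (n + 1) * (-1) ^ n = -1 := by
    rw [← pow_add, Odd.neg_one_pow ⟨n, by ring⟩]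
  rw [Ring.choose_eq_smul, ← aeval_eq_smeval, aeval_def,
    ← eval_map, descPochhammer_map, descPochhammer_eval_eq_prod_range, smul_eq_mul,
    prod_range_succ', Nat.cast_zero, sub_zero]
  simp only [hfactor, prod_div_distrib, prod_const, card_range, prod_neg]
  linear_combination ((∏ r ∈ range n, (((r : K) + 1) * p - 1)) * (p : K)⁻¹ ^ (n + 1) *
    ((n + 1)! : K)⁻¹) * hsign

theorem Complex.isBigO_one_sub_cpow_sub_sum_choose (a : ℂ) (n : ℕ) :
    (fun z : ℂ => (1 - z) ^ a - ∑ i ∈ range n, (-1) ^ i * Ring.choose a i * z ^ i)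
      =O[𝓝 0] fun z => z ^ n := by
  have h := (Complex.one_add_cpow_hasFPowerSeriesAt_zero (a := a)).isBigO_sub_partialSum_pow n
  have h' := h.comp_tendsto (neg_zero (G := ℂ) ▸ (continuous_neg (G := ℂ)).tendsto 0)
  refine (h'.congr_left fun z => ?_).trans (isBigO_of_le _ fun z => ?_)
  · simp only [Function.comp_apply, zero_add, FormalMultilinearSeries.partialSum, binomialSeries,
      FormalMultilinearSeries.ofScalars_apply_eq, smul_eq_mul, ← sub_eq_add_neg]
    congr 1
    exact sum_congr rfl fun i _ => by rw [neg_pow]; ring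
  · simp

theorem Complex.isBigO_one_sub_cpow_inv_natCast_sub {p : ℕ} (hp : p ≠ 0) (m : ℕ) :
    (fun z : ℂ => (1 - z) ^ (p⁻¹ : ℂ) - (1 - ∑ n ∈ Icc 1 m,
      (∏ r ∈ range (n - 1), (((r : ℂ) + 1) * p - 1)) * z ^ n / (n ! * (p : ℂ) ^ n)))
      =O[𝓝 0] fun z => z ^ (m + 1) := by
  refine (isBigO_one_sub_cpow_sub_sum_choose (p⁻¹ : ℂ) (m + 1)).congr_left fun z => ?_
  rw [sum_range_succ', ← Ico_add_one_right_eq_Icc, sum_Ico_eq_sum_range, add_tsub_cancel_right]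
  simp only [neg_one_pow_succ_mul_choose_inv_natCast hp, add_comm 1, Nat.add_sub_cancel, neg_div,
    neg_mul, sum_neg_distrib, div_mul_eq_mul_div, pow_zero, Ring.choose_zero_right, mul_one]
  ring

noncomputable def halleyNumerator (R : Type*) [CommRing R] (p : ℕ) : R[X] :=
  C ((p : R) - 1) * X ^ (p + 1) - C ((p : R) + 1) * X ^ p + C ((p : R) + 1) * X - C ((p : R) - 1)

theorem X_sub_one_pow_three_dvd_halleyNumerator (K : Type*) [Field K] [CharZero K] (p : ℕ) :
    (X - C 1) ^ 3 ∣ halleyNumerator K p := by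
  have hchoose : ((p : K) - 1) * ((p + 1).choose 2 : ℕ) = ((p : K) + 1) * (p.choose 2 : ℕ) := by
    rw [Nat.cast_choose_two, Nat.cast_choose_two]; push_cast; ring
  rw [X_sub_C_pow_dvd_iff, X_pow_dvd_iff]
  intro d hd
  simp only [halleyNumerator, sub_comp, add_comp, mul_comp, C_comp, X_pow_comp, X_comp, coeff_sub,
    coeff_add, coeff_C_mul, coeff_X_add_C_pow, coeff_C, one_pow, one_mul, coeff_X]
  interval_cases d
  · simp
  · simp; ring
  · simp [hchoose]

/-- Halley's iteration `v ↦ halleyStep p c v` for the equation `x ^ p = c`. -/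
def halleyStep {K : Type*} [Field K] (p : ℕ) (c v : K) : K :=
  v * ((p - 1) * v ^ p + (p + 1) * c) / ((p + 1) * v ^ p + (p - 1) * c)

theorem halleyStep_pow_sub {K : Type*} [Field K] (p : ℕ) {g v : K} (hg : g ≠ 0)
    (hD : (p + 1) * v ^ p + (p - 1) * g ^ p ≠ 0) :
    halleyStep p (g ^ p) v - g =
      g ^ (p + 1) * (halleyNumerator K p).eval (v / g) / ((p + 1) * v ^ p + (p - 1) * g ^ p) := by
  rw [halleyStep, div_sub' hD, halleyNumerator]
  simp only [eval_sub, eval_add, eval_mul, eval_C, eval_pow, eval_X]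
  congr 1
  rw [div_pow, div_pow]
  field_simp
  ring

theorem Asymptotics.IsBigO.halleyStep_sub {𝕜 α : Type*} [NormedField 𝕜] [CharZero 𝕜]
    {l : Filter α} {p : ℕ} (hp : p ≠ 0) {a : 𝕜} (ha : a ≠ 0) {g v e : α → 𝕜}
    (hg : Tendsto g l (𝓝 a)) (hv : (fun x => v x - g x) =O[l] e) (he : Tendsto e l (𝓝 0)) :
    (fun x => halleyStep p (g x ^ p) (v x) - g x) =O[l] fun x => e x ^ 3 := by
  obtain ⟨Q, hQ⟩ := X_sub_one_pow_three_dvd_halleyNumerator 𝕜 p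
  have hv' : Tendsto v l (𝓝 a) := by simpa using (hv.trans_tendsto he).add hg
  have hD : Tendsto (fun x => (p + 1) * v x ^ p + (p - 1) * g x ^ p) l (𝓝 (2 * p * a ^ p)) := by
    convert ((hv'.pow p).const_mul ((p : 𝕜) + 1)).add ((hg.pow p).const_mul ((p : 𝕜) - 1))
      using 2
    ring
  have hD0 : (2 * p * a ^ p : 𝕜) ≠ 0 := by
    have : (p : 𝕜) ≠ 0 := Nat.cast_ne_zero.2 hp
    simp [this, ha]
  have hw : (fun x => v x / g x - 1) =O[l] e := by
    refine (hv.mul ((hg.inv₀ ha).isBigO_one 𝕜)).congr' ?_ (by simp)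
    filter_upwards [hg.eventually_ne ha] with x hx
    field_simp
  have hrest : Tendsto (fun x => g x ^ (p + 1) * Q.eval (v x / g x) /
      ((p + 1) * v x ^ p + (p - 1) * g x ^ p)) l (𝓝 (a ^ (p + 1) * Q.eval 1 / (2 * p * a ^ p))) :=
    ((hg.pow _).mul ((Q.continuous.tendsto 1).comp (div_self ha ▸ hv'.div hg ha))).div hD hD0
  refine ((hw.pow 3).mul (hrest.isBigO_one 𝕜)).congr' ?_ (by simp)
  filter_upwards [hg.eventually_ne ha, hD.eventually_ne hD0] with x hgx hDx
  rw [halleyStep_pow_sub p hgx hDx, hQ, eval_mul, eval_pow, eval_sub, eval_X, eval_C]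
  ring

open Asymptotics in
theorem stmt_18 (p : ℕ) (hp : 2 ≤ p) (V : ℕ → ℂ → ℂ)
    (hV0 : ∀ z, V 0 z = 1)
    (hV : ∀ k z, V (k + 1) z =
      V k z * ((p - 1) * (V k z) ^ p + (p + 1) * (1 - z)) /
        ((p + 1) * (V k z) ^ p + (p - 1) * (1 - z))) :
    (∀ k, V k 0 = 1) ∧
    ∀ k, (fun z : ℂ =>
        V k z - (1 - ∑ n ∈ Finset.Icc 1 (3 ^ k - 1),
          (∏ r ∈ Finset.range (n - 1), (((r : ℂ) + 1) * p - 1)) * z ^ n /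
            (n.factorial * (p : ℂ) ^ n))) =O[nhds 0]
      fun z : ℂ => z ^ (3 ^ k) := by
  have hp0 : p ≠ 0 := by omega
  set g : ℂ → ℂ := fun z => (1 - z) ^ (p⁻¹ : ℂ)
  have hg : Tendsto g (𝓝 0) (𝓝 1) := by
    simpa [g] using ((continuousAt_const.sub continuousAt_id).cpow continuousAt_const
      (by simp) : ContinuousAt g 0).tendsto
  have herr : ∀ k, (fun z => V k z - g z) =O[𝓝 0] fun z => z ^ 3 ^ k := by
    intro k
    induction k with
    | zero => simpa [hV0] using (Complex.isBigO_one_sub_cpow_inv_natCast_sub hp0 0).neg_left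
    | succ k ih =>
      have hstep : V (k + 1) = fun z => halleyStep p (g z ^ p) (V k z) :=
        funext fun z => by rw [hV, Complex.cpow_nat_inv_pow _ hp0, halleyStep]
      simp_rw [hstep, pow_succ, pow_mul]
      exact ih.halleyStep_sub hp0 one_ne_zero hg
        ((continuous_pow _).tendsto' 0 0 (zero_pow (by positivity)))
  refine ⟨fun k => ?_, fun k => ?_⟩
  · have := mem_of_mem_nhds (herr k).eq_zero_imp (by simp)
    simpa [g, sub_eq_zero] using this
  · obtain ⟨m, hm⟩ := Nat.exists_eq_add_one_of_ne_zero (by positivity : 3 ^ k ≠ 0)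
    rw [hm, Nat.add_sub_cancel]
    exact ((hm ▸ herr k).add (Complex.isBigO_one_sub_cpow_inv_natCast_sub hp0 m)).congr_left
      fun z => sub_add_sub_cancel _ _ _
end
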